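/- arXiv:math/0610898 — 13 statements merged into one kernel-verified Lean document; each statement's English description precedes it below -/
import Mathlib

section
/- In A, the Casimir element C q-commutes with e: e·C = q·C·e. -/
/-!
Write `[a, b]_q = a b - q b a`. The relations say `[e, h]_q = -2e` and
`[e, f]_q = h + ((1 - q)/4) h²`. The twisted Leibniz rule `[a, b c]_{pq} = [a, b]_p c + p b [a, c]_q`
gives `[e, h²]_{q²} = -2(e h + q h e)`, and expanding `C` yields
`[e, C]_q = 2e + 2 e h + ½ [e, h²]_{q²} = 2e + [e, h]_q = 0`.
-/

def qCommutator {R A : Type*} [CommSemiring R] [Ring A] [Algebra R A] (q : R) (a b : A) : A :=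
  a * b - q • (b * a)

section

variable {R A : Type*} [CommSemiring R] [Ring A] [Algebra R A]

theorem qCommutator_mul_right (p q : R) (a b c : A) :
    qCommutator (p * q) a (b * c) = qCommutator p a b * c + p • (b * qCommutator q a c) := by
  simp only [qCommutator, sub_mul, mul_sub, smul_sub, smul_mul_assoc, mul_smul_comm, smul_smul,
    mul_assoc]
  abel

theorem qCommutator_self_mul (q : R) (a b : A) :
    qCommutator q a (a * b) = a * qCommutator q a b := by
  simp only [qCommutator, mul_sub, mul_smul_comm, mul_assoc]

end

theorem jz_casimir_qcommutes_e_general {A : Type*} [Ring A] [Algebra ℂ A]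
    (q : ℂ) (e f h : A)
    (rel1 : q • (h * e) - e * h = 2 * e)
    (rel3 : e * f - q • (f * e) = h + ((1 - q) / 4) • h ^ 2)
    (C : A) (hC : C = 2 * (e * f) - h + (q / 2) • h ^ 2) :
    e * C = q • (C * e) := by
  have heh : qCommutator q e h = -(2 * e) := by
    rw [qCommutator, ← rel1, neg_sub]
  have hef : qCommutator q e f = h + ((1 - q) / 4) • h ^ 2 := rel3
  have heh2 : qCommutator (q * q) e (h ^ 2) = -(2 * (e * h) + (2 * q) • (h * e)) := by
    rw [sq, qCommutator_mul_right, heh]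
    noncomm_ring; module
  rw [← sub_eq_zero]
  calc e * C - q • (C * e)
      = 2 * qCommutator q e (e * f) - qCommutator q e h + (q / 2) • qCommutator q e (h ^ 2) := by
        rw [hC]; simp only [qCommutator]; noncomm_ring; module
    _ = 2 * (e * (h + ((1 - q) / 4) • h ^ 2)) + 2 * e + (q / 2) • qCommutator q e (h ^ 2) := by
        rw [qCommutator_self_mul, hef, heh]; noncomm_ring
    _ = 2 * e + 2 * (e * h) + (2⁻¹ : ℂ) • qCommutator (q * q) e (h ^ 2) := by
        simp only [qCommutator]; noncomm_ring; module
    _ = 2 * e + qCommutator q e h := by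
        rw [heh2, qCommutator]; noncomm_ring; module
    _ = 0 := by rw [heh]; abel

/-- the Casimir element `C = 2·e·f − h + (q/2)·h²` q-commutes with `e`:
`e·C = q·C·e`. -/
theorem jz_casimir_qcommutes_e {A : Type*} [Ring A] [Algebra ℂ A]
    (q : ℂ) (hq : q ≠ 0) (e f h : A)
    (rel1 : q • (h * e) - e * h = 2 * e)
    (rel2 : h * f - q • (f * h) = -(2 * f))
    (rel3 : e * f - q • (f * e) = h + ((1 - q) / 4) • h ^ 2)
    (C : A) (hC : C = 2 * (e * f) - h + (q / 2) • h ^ 2) :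
    e * C = q • (C * e) :=
  jz_casimir_qcommutes_e_general q e f h rel1 rel3 C hC
end

section
/- In A, the Casimir element C q⁻¹-commutes with f: f·C = q⁻¹·C·f. -/
/-! Moving `f` to the left with `h f = f (q h - 2)` and `e f = q f e + h + ((1 - q)/4) h²`
turns `C f` into `q f C`; dividing by `q` gives the claim. -/

namespace JingZhang

variable {K A : Type*} [Field K] [Ring A] [Algebra K A] {q : K} {e f h : A}

lemma h_mul_f_mul (rel2 : h * f - q • (f * h) = -(2 * f)) (x : A) :
    h * (f * x) = q • (f * (h * x)) - 2 * (f * x) := by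
  rw [← mul_assoc, sub_eq_iff_eq_add.mp rel2]
  simp only [add_mul, neg_mul, smul_mul_assoc, mul_assoc]
  abel

variable (q e f h) in
def casimir : A := 2 * (e * f) - h + (q / 2) • h ^ 2

theorem casimir_mul_f [NeZero (2 : K)] (rel2 : h * f - q • (f * h) = -(2 * f))
    (rel3 : e * f - q • (f * e) = h + ((1 - q) / 4) • h ^ 2) :
    casimir q e f h * f = q • (f * casimir q e f h) := by
  have hf := h_mul_f_mul rel2
  have hf₁ : h * f = q • (f * h) - 2 * f := by simpa using hf 1
  have ef : e * f = q • (f * e) + (h + ((1 - q) / 4) • h ^ 2) := sub_eq_iff_eq_add'.mp rel3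
  have four : (4 : K) ≠ 0 := by
    rw [show (4 : K) = 2 * 2 by norm_num]
    exact mul_ne_zero two_ne_zero two_ne_zero
  simp only [casimir, ef, hf₁, hf, pow_two, mul_add, add_mul, mul_sub, sub_mul,
    smul_mul_assoc, mul_smul_comm, smul_smul, smul_add, smul_sub, mul_assoc, two_mul]
  match_scalars <;> field_simp <;> ring

end JingZhang

theorem jz_casimir_qinv_commutes_f_general {A : Type*} [Ring A] [Algebra ℂ A]
    (q : ℂ) (hq : q ≠ 0) (e f h : A)
    (rel2 : h * f - q • (f * h) = -(2 * f))
    (rel3 : e * f - q • (f * e) = h + ((1 - q) / 4) • h ^ 2)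
    (C : A) (hC : C = 2 * (e * f) - h + (q / 2) • h ^ 2) :
    f * C = q⁻¹ • (C * f) := by
  have hCf : C * f = q • (f * C) := hC ▸ JingZhang.casimir_mul_f rel2 rel3
  rw [hCf, smul_smul, inv_mul_cancel₀ hq, one_smul]

/-- the Casimir element `C = 2·e·f − h + (q/2)·h²` q⁻¹-commutes with `f`:
`f·C = q⁻¹·C·f`. -/
theorem jz_casimir_qinv_commutes_f {A : Type*} [Ring A] [Algebra ℂ A]
    (q : ℂ) (hq : q ≠ 0) (e f h : A)
    (rel1 : q • (h * e) - e * h = 2 * e)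
    (rel2 : h * f - q • (f * h) = -(2 * f))
    (rel3 : e * f - q • (f * e) = h + ((1 - q) / 4) • h ^ 2)
    (C : A) (hC : C = 2 * (e * f) - h + (q / 2) • h ^ 2) :
    f * C = q⁻¹ • (C * f) :=
  jz_casimir_qinv_commutes_f_general q hq e f h rel2 rel3 C hC
end

section
/- In A, the Casimir element C commutes with h: h·C = C·h. -/
/-!
Moving `h` across `e * f`, the factor `q` picked up at `e` is returned at `f`,
and the correction terms `2 * e * f` cancel.
Hence `q • [h, e * f] = 0`, so `h` commutes with `e * f`, and thus with every term of `C`.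
-/

section TwistedRelations

variable {R A : Type*} [CommRing R] [Ring A] [Algebra R A] {q : R} {e f h : A}

theorem smul_mul_mul_eq_of_twisted_relations
    (rel1 : q • (h * e) - e * h = 2 * e) (rel2 : h * f - q • (f * h) = -(2 * f)) :
    q • (h * (e * f)) = q • (e * f * h) := by
  have he : q • (h * e) = e * h + 2 * e := by rw [← rel1]; abel
  have hf : h * f = q • (f * h) - 2 * f := by
    rw [← neg_neg (2 * f), ← rel2]; abel
  calc q • (h * (e * f)) = q • (h * e) * f := by rw [smul_mul_assoc, mul_assoc]
    _ = e * (h * f) + 2 * (e * f) := by rw [he]; noncomm_ring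
    _ = q • (e * f * h) := by rw [hf, mul_sub, mul_smul_comm]; noncomm_ring

theorem commute_mul_of_twisted_relations (hq : IsUnit q)
    (rel1 : q • (h * e) - e * h = 2 * e) (rel2 : h * f - q • (f * h) = -(2 * f)) :
    Commute h (e * f) :=
  hq.smul_left_cancel.mp (smul_mul_mul_eq_of_twisted_relations rel1 rel2)

end TwistedRelations

theorem jz_casimir_commutes_h_general {A : Type*} [Ring A] [Algebra ℂ A]
    (q : ℂ) (hq : q ≠ 0) (e f h : A)
    (rel1 : q • (h * e) - e * h = 2 * e)
    (rel2 : h * f - q • (f * h) = -(2 * f))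
    (C : A) (hC : C = 2 * (e * f) - h + (q / 2) • h ^ 2) :
    h * C = C * h := by
  have hef : Commute h (e * f) := commute_mul_of_twisted_relations hq.isUnit rel1 rel2
  have hh : Commute h h := Commute.refl h
  subst hC
  exact ((((Commute.ofNat_right h 2).mul_right hef).sub_right hh).add_right
    ((hh.pow_right 2).smul_right _)).eq

/-- the Casimir element `C = 2·e·f − h + (q/2)·h²` commutes with `h`:
`h·C = C·h`. -/
theorem jz_casimir_commutes_h {A : Type*} [Ring A] [Algebra ℂ A]
    (q : ℂ) (hq : q ≠ 0) (e f h : A)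
    (rel1 : q • (h * e) - e * h = 2 * e)
    (rel2 : h * f - q • (f * h) = -(2 * f))
    (rel3 : e * f - q • (f * e) = h + ((1 - q) / 4) • h ^ 2)
    (C : A) (hC : C = 2 * (e * f) - h + (q / 2) • h ^ 2) :
    h * C = C * h :=
  jz_casimir_commutes_h_general q hq e f h rel1 rel2 C hC
end

section
/- In A, the element h commutes with the element e·f, i.e. h·(e·f) = (e·f)·h. -/
/-! After multiplying by `q`, the first relation moves `h` past `e` and the second moves it past `f`;
the two error terms `± c • (e * f)` cancel, and `q` is invertible. -/

theorem commute_mul_of_twisted_comm {R A : Type*} [CommSemiring R] [Ring A] [Algebra R A]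
    {q c : R} (hq : IsUnit q) {e f h : A}
    (he : q • (h * e) - e * h = c • e) (hf : h * f - q • (f * h) = -(c • f)) :
    Commute h (e * f) := by
  have he' : q • (h * e) = e * h + c • e := by rw [← he, add_sub_cancel]
  have hf' : h * f = q • (f * h) - c • f := by rw [← neg_add_eq_sub, ← hf, sub_add_cancel]
  rw [Commute, SemiconjBy, ← hq.smul_left_cancel]
  calc q • (h * (e * f)) = q • (h * e) * f := by rw [smul_mul_assoc, mul_assoc]
    _ = e * (h * f) + c • (e * f) := by rw [he', add_mul, mul_assoc, smul_mul_assoc]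
    _ = q • (e * f * h) := by
      rw [hf', mul_sub, mul_smul_comm, mul_smul_comm, ← mul_assoc, sub_add_cancel]

theorem jz_h_commutes_ef_general {A : Type*} [Ring A] [Algebra ℂ A]
    (q : ℂ) (hq : q ≠ 0) (e f h : A)
    (rel1 : q • (h * e) - e * h = 2 * e)
    (rel2 : h * f - q • (f * h) = -(2 * f)) :
    h * (e * f) = (e * f) * h := by
  refine (commute_mul_of_twisted_comm (c := (2 : ℂ)) hq.isUnit ?_ ?_).eq
  · simpa only [two_smul, two_mul] using rel1
  · simpa only [two_smul, two_mul] using rel2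

/-- `h` commutes with `e·f`: `h·(e·f) = (e·f)·h`. -/
theorem jz_h_commutes_ef {A : Type*} [Ring A] [Algebra ℂ A]
    (q : ℂ) (hq : q ≠ 0) (e f h : A)
    (rel1 : q • (h * e) - e * h = 2 * e)
    (rel2 : h * f - q • (f * h) = -(2 * f))
    (rel3 : e * f - q • (f * e) = h + ((1 - q) / 4) • h ^ 2) :
    h * (e * f) = (e * f) * h :=
  jz_h_commutes_ef_general q hq e f h rel1 rel2
end

section
/- There is a unique ℂ-algebra endomorphism θ of the polynomial ring R = ℂ[ξ, h] with θ(h) = q·h − 2 and θ(ξ) = q·ξ + q²·h + ((q² − q³)/4)·h² − (q+1); moreover θ is an automorphism of R, and its inverse satisfies θ⁻¹(h) = q⁻¹·(h + 2) and θ⁻¹(ξ) = q⁻¹·(ξ − h − ((1−q)/4)·h²). -/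
open MvPolynomial

/-- in `R = ℂ[ξ, h]` (with `ξ = X 0`, `h = X 1`) there is a unique
ℂ-algebra endomorphism `θ` with `θ(h) = q·h − 2` and
`θ(ξ) = q·ξ + q²·h + ((q² − q³)/4)·h² − (q+1)`; moreover `θ` is an automorphism,
whose inverse satisfies `θ⁻¹(h) = q⁻¹·(h + 2)` and
`θ⁻¹(ξ) = q⁻¹·(ξ − h − ((1−q)/4)·h²)`. -/
theorem jz_theta_exists_unique_automorphism (q : ℂ) (hq : q ≠ 0) :
    (∃! θ : MvPolynomial (Fin 2) ℂ →ₐ[ℂ] MvPolynomial (Fin 2) ℂ,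
      θ (X 1) = q • X 1 - 2 ∧
      θ (X 0) = q • X 0 + q ^ 2 • X 1 + ((q ^ 2 - q ^ 3) / 4) • (X 1) ^ 2
                  - MvPolynomial.C (q + 1)) ∧
    (∃ θ : MvPolynomial (Fin 2) ℂ ≃ₐ[ℂ] MvPolynomial (Fin 2) ℂ,
      θ (X 1) = q • X 1 - 2 ∧
      θ (X 0) = q • X 0 + q ^ 2 • X 1 + ((q ^ 2 - q ^ 3) / 4) • (X 1) ^ 2
                  - MvPolynomial.C (q + 1) ∧
      θ.symm (X 1) = q⁻¹ • (X 1 + 2) ∧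
      θ.symm (X 0) = q⁻¹ • (X 0 - X 1 - ((1 - q) / 4) • (X 1) ^ 2)) := by
  have h2 : (2 : MvPolynomial (Fin 2) ℂ) = (2:ℂ) • 1 := by
    rw [MvPolynomial.smul_eq_C_mul, mul_one]; exact (map_ofNat MvPolynomial.C 2).symm
  set e0 : MvPolynomial (Fin 2) ℂ :=
    q • X 0 + q ^ 2 • X 1 + ((q ^ 2 - q ^ 3) / 4) • (X 1) ^ 2 - MvPolynomial.C (q + 1) with he0
  set e1 : MvPolynomial (Fin 2) ℂ := q • X 1 - 2 with he1
  set i0 : MvPolynomial (Fin 2) ℂ :=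
    q⁻¹ • (X 0 - X 1 - ((1 - q) / 4) • (X 1) ^ 2) with hi0
  set i1 : MvPolynomial (Fin 2) ℂ := q⁻¹ • (X 1 + 2) with hi1
  set f : MvPolynomial (Fin 2) ℂ →ₐ[ℂ] MvPolynomial (Fin 2) ℂ := aeval ![e0, e1] with hf
  set g : MvPolynomial (Fin 2) ℂ →ₐ[ℂ] MvPolynomial (Fin 2) ℂ := aeval ![i0, i1] with hg
  have hf0 : f (X 0) = e0 := by
    simp [hf]
  have hf1 : f (X 1) = e1 := by
    simp [hf]
  have hg0 : g (X 0) = i0 := by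
    simp [hg]
  have hg1 : g (X 1) = i1 := by
    simp [hg]
  -- g ∘ f = id
  have hgf : g.comp f = AlgHom.id ℂ _ := by
    apply MvPolynomial.algHom_ext
    intro i
    fin_cases i
    · show g (f (X 0)) = X 0
      rw [hf0, he0]
      simp only [map_add, map_sub, map_smul, map_pow, hg0, hg1, hi0, hi1, hg, MvPolynomial.aeval_X, Matrix.cons_val_zero, Matrix.cons_val_one, Matrix.head_cons,
        MvPolynomial.aeval_C]
      have hsq : ((X 1 : MvPolynomial (Fin 2) ℂ) + 2) ^ 2
          = (X 1)^2 + (4:ℂ) • X 1 + (4:ℂ) • 1 := by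
        rw [MvPolynomial.smul_eq_C_mul, MvPolynomial.smul_eq_C_mul]
        simp only [map_ofNat]
        ring
      rw [smul_pow, hsq, h2]
      simp only [MvPolynomial.algebraMap_eq, MvPolynomial.C_eq_smul_one]
      match_scalars <;> field_simp <;> ring
    · show g (f (X 1)) = X 1
      rw [hf1, he1]
      simp only [map_sub, map_smul, map_ofNat, hg1, hi1, hg, MvPolynomial.aeval_X, Matrix.cons_val_zero, Matrix.cons_val_one, Matrix.head_cons]
      rw [h2]
      match_scalars <;> field_simp <;> ring
  -- f ∘ g = id
  have hfg : f.comp g = AlgHom.id ℂ _ := by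
    apply MvPolynomial.algHom_ext
    intro i
    fin_cases i
    · show f (g (X 0)) = X 0
      rw [hg0, hi0]
      simp only [map_sub, map_smul, map_pow, hf0, hf1, he0, he1, hf, MvPolynomial.aeval_X, Matrix.cons_val_zero, Matrix.cons_val_one, Matrix.head_cons]
      have hsq : ((q • X 1 - 2 : MvPolynomial (Fin 2) ℂ)) ^ 2
          = (q^2) • (X 1)^2 - (4*q) • X 1 + (4:ℂ) • 1 := by
        simp only [MvPolynomial.smul_eq_C_mul, map_pow, map_mul, map_ofNat]
        ring
      rw [hsq, h2]
      simp only [MvPolynomial.algebraMap_eq, MvPolynomial.C_eq_smul_one]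
      match_scalars <;> field_simp <;> ring
    · show f (g (X 1)) = X 1
      rw [hg1, hi1]
      simp only [map_add, map_smul, map_ofNat, hf1, he1, hf, MvPolynomial.aeval_X, Matrix.cons_val_zero, Matrix.cons_val_one, Matrix.head_cons]
      rw [h2]
      match_scalars <;> field_simp <;> ring
  constructor
  · refine ⟨f, ⟨hf1, hf0⟩, ?_⟩
    intro θ ⟨hθ1, hθ0⟩
    apply MvPolynomial.algHom_ext
    intro i
    fin_cases i
    · show θ (X 0) = f (X 0); rw [hθ0, hf0, he0]
    · show θ (X 1) = f (X 1); rw [hθ1, hf1, he1]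
  · refine ⟨AlgEquiv.ofAlgHom f g hfg hgf, hf1, hf0, ?_, ?_⟩
    · show g (X 1) = _; rw [hg1, hi1]
    · show g (X 0) = _; rw [hg0, hi0]
end

section
/- The polynomial C̃ := 2·ξ − h + (q/2)·h² in R satisfies θ(C̃) = q·C̃, and consequently θⁿ(C̃) = qⁿ·C̃ for every integer n. -/
open MvPolynomial

/-- the polynomial `C̃ = 2·ξ − h + (q/2)·h²` in `R = ℂ[ξ, h]`
(with `ξ = X 0`, `h = X 1`) satisfies `θ(C̃) = q·C̃`, and consequently
`θⁿ(C̃) = qⁿ·C̃` for every integer `n`. -/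
theorem jz_theta_casimir_eigenvector (q : ℂ) (hq : q ≠ 0)
    (θ : MvPolynomial (Fin 2) ℂ ≃ₐ[ℂ] MvPolynomial (Fin 2) ℂ)
    (hθh : θ (X 1) = q • X 1 - 2)
    (hθξ : θ (X 0) = q • X 0 + q ^ 2 • X 1 + ((q ^ 2 - q ^ 3) / 4) • (X 1) ^ 2
                - MvPolynomial.C (q + 1))
    (Ctilde : MvPolynomial (Fin 2) ℂ)
    (hCt : Ctilde = 2 * X 0 - X 1 + (q / 2) • (X 1) ^ 2) :
    θ Ctilde = q • Ctilde ∧ ∀ n : ℤ, (θ ^ n) Ctilde = (q ^ n) • Ctilde := by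
  have key : θ Ctilde = q • Ctilde := by
    subst hCt
    have sq : (q • X 1 - 2 : MvPolynomial (Fin 2) ℂ) ^ 2
        = (q ^ 2) • (X 1) ^ 2 - (4 * q) • X 1 + (4 : ℂ) • 1 := by
      simp only [MvPolynomial.smul_eq_C_mul, map_pow, map_mul, map_ofNat]
      ring
    have h2 : ∀ p : MvPolynomial (Fin 2) ℂ, 2 * p = (2 : ℂ) • p := by
      intro p
      rw [MvPolynomial.smul_eq_C_mul, map_ofNat]
    have hC1 : (MvPolynomial.C (q + 1) : MvPolynomial (Fin 2) ℂ) = (q + 1) • 1 := by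
      rw [MvPolynomial.C_eq_smul_one]
    have h2' : (2 : MvPolynomial (Fin 2) ℂ) = (2 : ℂ) • 1 := by
      rw [MvPolynomial.smul_eq_C_mul, map_ofNat, mul_one]
    simp only [map_add, map_sub, map_mul, map_smul, map_pow, map_ofNat, hθh, hθξ, sq, hC1]
    rw [h2 (q • X 0 + q ^ 2 • X 1 + ((q ^ 2 - q ^ 3) / 4) • X 1 ^ 2 - (q + 1) • 1), h2 (X 0)]
    rw [h2']
    module
  refine ⟨key, ?_⟩
  have keyinv : θ.symm Ctilde = q⁻¹ • Ctilde := by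
    have h1 : q • θ.symm Ctilde = Ctilde := by
      rw [← map_smul, ← key, θ.symm_apply_apply]
    calc θ.symm Ctilde = q⁻¹ • (q • θ.symm Ctilde) := by
          rw [smul_smul, inv_mul_cancel₀ hq, one_smul]
      _ = q⁻¹ • Ctilde := by rw [h1]
  have hnat : ∀ m : ℕ, (θ ^ m) Ctilde = (q ^ m) • Ctilde := by
    intro m
    induction m with
    | zero => simp
    | succ k ih =>
      rw [pow_succ', pow_succ']
      show θ ((θ ^ k) Ctilde) = _
      rw [ih, map_smul, key, smul_smul, mul_comm]
  have hinv : ∀ m : ℕ, (θ.symm ^ m) Ctilde = (q⁻¹ ^ m) • Ctilde := by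
    intro m
    induction m with
    | zero => simp
    | succ k ih =>
      rw [pow_succ', pow_succ']
      show θ.symm ((θ.symm ^ k) Ctilde) = _
      rw [ih, map_smul, keyinv, smul_smul, mul_comm]
  intro n
  induction n using Int.rec with
  | ofNat m =>
    simpa [zpow_natCast] using hnat m
  | negSucc m =>
    rw [zpow_negSucc, zpow_negSucc, ← inv_pow, ← inv_pow]
    exact hinv (m + 1)
end

section
/- Assume moreover q ≠ 1. For every integer n one has θⁿ(ξ) = qⁿ·ξ + (q^{n+1}·(1 − qⁿ)/4)·h² + (q^{n+1}·(qⁿ − 1)/(q − 1))·h − (qⁿ − 1)·(q^{n+1} − 1)/(q − 1)² in R. -/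
open MvPolynomial

lemma jz_theta_step (q : ℂ) (hq : q ≠ 0) (hq1 : q ≠ 1)
    (θ : MvPolynomial (Fin 2) ℂ ≃ₐ[ℂ] MvPolynomial (Fin 2) ℂ)
    (hθh : θ (X 1) = q • X 1 - 2)
    (hθξ : θ (X 0) = q • X 0 + q ^ 2 • X 1 + ((q ^ 2 - q ^ 3) / 4) • (X 1) ^ 2
                - MvPolynomial.C (q + 1)) (n : ℤ) :
    θ ((q ^ n) • X 0 + (q ^ (n + 1) * (1 - q ^ n) / 4) • (X 1) ^ 2
          + (q ^ (n + 1) * (q ^ n - 1) / (q - 1)) • X 1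
          - MvPolynomial.C ((q ^ n - 1) * (q ^ (n + 1) - 1) / (q - 1) ^ 2))
      = (q ^ (n+1)) • X 0 + (q ^ (n + 1 + 1) * (1 - q ^ (n+1)) / 4) • (X 1) ^ 2
          + (q ^ (n + 1 + 1) * (q ^ (n+1) - 1) / (q - 1)) • X 1
          - MvPolynomial.C ((q ^ (n+1) - 1) * (q ^ (n + 1 + 1) - 1) / (q - 1) ^ 2) := by
  have hq1' : q - 1 ≠ 0 := sub_ne_zero.mpr hq1
  simp only [map_add, map_sub, map_smul, map_pow, ← MvPolynomial.algebraMap_eq,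
    AlgEquiv.commutes]
  rw [hθh, hθξ]
  apply MvPolynomial.funext
  intro x
  simp only [map_add, map_sub, map_mul, map_smul, map_pow, eval_X, eval_C, smul_eq_mul, smul_eval,
    MvPolynomial.algebraMap_eq, map_ofNat]
  simp only [zpow_add_one₀ hq]
  field_simp
  ring

/-- if `q ≠ 1`, then for every integer `n` one has
`θⁿ(ξ) = qⁿ·ξ + (q^{n+1}·(1 − qⁿ)/4)·h² + (q^{n+1}·(qⁿ − 1)/(q − 1))·h
         − (qⁿ − 1)·(q^{n+1} − 1)/(q − 1)²`
in `R = ℂ[ξ, h]` (with `ξ = X 0`, `h = X 1`). -/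
theorem jz_theta_pow_xi (q : ℂ) (hq : q ≠ 0) (hq1 : q ≠ 1)
    (θ : MvPolynomial (Fin 2) ℂ ≃ₐ[ℂ] MvPolynomial (Fin 2) ℂ)
    (hθh : θ (X 1) = q • X 1 - 2)
    (hθξ : θ (X 0) = q • X 0 + q ^ 2 • X 1 + ((q ^ 2 - q ^ 3) / 4) • (X 1) ^ 2
                - MvPolynomial.C (q + 1)) :
    ∀ n : ℤ, (θ ^ n) (X 0)
      = (q ^ n) • X 0 + (q ^ (n + 1) * (1 - q ^ n) / 4) • (X 1) ^ 2
          + (q ^ (n + 1) * (q ^ n - 1) / (q - 1)) • X 1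
          - MvPolynomial.C ((q ^ n - 1) * (q ^ (n + 1) - 1) / (q - 1) ^ 2) := by
  have key : ∀ n : ℤ, (θ ^ (1 + n)) (X 0) = θ ((θ ^ n) (X 0)) := by
    intro n
    rw [zpow_add, zpow_one]
    rfl
  intro n
  induction n using Int.induction_on with
  | zero => simp
  | succ k ih =>
      have h1 : ((k : ℤ) + 1) = 1 + (k : ℤ) := by ring
      rw [h1, key, ih, ← h1]
      exact jz_theta_step q hq hq1 θ hθh hθξ k
  | pred k ih =>
      have h1 : (-(k : ℤ)) = 1 + (-(k : ℤ) - 1) := by ring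
      have h2 : θ ((θ ^ (-(k : ℤ) - 1)) (X 0))
          = θ ((q ^ (-(k:ℤ) - 1)) • X 0
              + (q ^ (-(k:ℤ) - 1 + 1) * (1 - q ^ (-(k:ℤ) - 1)) / 4) • (X 1) ^ 2
              + (q ^ (-(k:ℤ) - 1 + 1) * (q ^ (-(k:ℤ) - 1) - 1) / (q - 1)) • X 1
              - MvPolynomial.C ((q ^ (-(k:ℤ) - 1) - 1) * (q ^ (-(k:ℤ) - 1 + 1) - 1)
                  / (q - 1) ^ 2)) := by
        rw [← key, jz_theta_step q hq hq1 θ hθh hθξ (-(k:ℤ) - 1), ← h1]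
        have h3 : (-(k : ℤ) - 1 + 1) = -(k : ℤ) := by ring
        rw [h3, ih]
      have := θ.injective h2
      convert this using 3
end

section
/- Assume moreover q ≠ 1. For every natural number n, the following identities hold in A: eⁿ·h = (qⁿ·h − 2·(qⁿ − 1)/(q − 1))·eⁿ and fⁿ·h = (q^{−n}·h − 2·(q^{−n} − 1)/(q − 1))·fⁿ. -/
/-! Each relation says that moving `x ∈ {e, f}` past `h` applies an affine map:
`x * h = (t • h + s) * x`, with `(t, s) = (q, -2)` for `e` and `(q⁻¹, 2q⁻¹)` for `f`.
Iterating, `xⁿ * h = (tⁿ • h + s (1 + t + ⋯ + tⁿ⁻¹)) * xⁿ`, and the geometric sum is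
`(tⁿ - 1)/(t - 1)` since `t ≠ 1`. -/

open Finset

theorem pow_mul_eq_of_mul_eq_smul_add_algebraMap_mul {R A : Type*} [CommSemiring R] [Semiring A]
    [Algebra R A] {x y : A} {t s : R} (hxy : x * y = (t • y + algebraMap R A s) * x) (n : ℕ) :
    x ^ n * y = (t ^ n • y + algebraMap R A (s * ∑ i ∈ range n, t ^ i)) * x ^ n := by
  induction n with
  | zero => simp
  | succ n ih =>
    set a := s * ∑ i ∈ range n, t ^ i
    calc x ^ (n + 1) * y = (t ^ n • (x * y) + x * algebraMap R A a) * x ^ n := by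
          rw [pow_succ', mul_assoc, ih, ← mul_assoc, mul_add, mul_smul_comm]
      _ = (t ^ n • (t • y + algebraMap R A s) + algebraMap R A a) * x ^ (n + 1) := by
          rw [hxy, ← Algebra.commutes, ← smul_mul_assoc, ← add_mul, mul_assoc, ← pow_succ']
      _ = (t ^ (n + 1) • y + algebraMap R A (s * ∑ i ∈ range (n + 1), t ^ i))
            * x ^ (n + 1) := by
          rw [smul_add, smul_smul, ← pow_succ, Algebra.smul_def (t ^ n), ← map_mul, add_assoc,
            ← map_add, sum_range_succ, mul_add, add_comm a]
          ring_nf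

namespace JingZhang

theorem e_mul_h_eq {R A : Type*} [CommRing R] [Ring A] [Algebra R A] {q : R} {e h : A}
    (rel : q • (h * e) - e * h = 2 * e) : e * h = (q • h + algebraMap R A (-2)) * e := by
  rw [add_mul, smul_mul_assoc, map_neg, map_ofNat, neg_mul, ← rel]
  abel

theorem f_mul_h_eq {K A : Type*} [Field K] [Ring A] [Algebra K A] {q : K} (hq : q ≠ 0) {f h : A}
    (rel : h * f - q • (f * h) = -(2 * f)) :
    f * h = (q⁻¹ • h + algebraMap K A (2 * q⁻¹)) * f := by
  have rel' : q • (f * h) = h * f + 2 * f := by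
    rw [← sub_sub_cancel (h * f) (q • (f * h)), rel, sub_neg_eq_add]
  calc f * h = q⁻¹ • q • (f * h) := (inv_smul_smul₀ hq _).symm
    _ = _ := by
      rw [rel', add_mul, smul_mul_assoc, map_mul, map_ofNat, mul_assoc, ← Algebra.smul_def,
        smul_add, mul_smul_comm]

end JingZhang

theorem jz_powers_twisted_commutation_h_general {A : Type*} [Ring A] [Algebra ℂ A]
    (q : ℂ) (hq : q ≠ 0) (hq1 : q ≠ 1) (e f h : A)
    (rel1 : q • (h * e) - e * h = 2 * e)
    (rel2 : h * f - q • (f * h) = -(2 * f)) :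
    ∀ n : ℕ,
      e ^ n * h
        = ((q ^ n) • h - algebraMap ℂ A (2 * (q ^ n - 1) / (q - 1))) * e ^ n ∧
      f ^ n * h
        = ((q ^ (-(n : ℤ))) • h
            - algebraMap ℂ A (2 * (q ^ (-(n : ℤ)) - 1) / (q - 1))) * f ^ n := by
  intro n
  refine ⟨?_, ?_⟩
  · rw [pow_mul_eq_of_mul_eq_smul_add_algebraMap_mul (JingZhang.e_mul_h_eq rel1) n,
      geom_sum_eq hq1, sub_eq_add_neg (_ • h), ← map_neg]
    congr 3
    ring
  · rw [pow_mul_eq_of_mul_eq_smul_add_algebraMap_mul (JingZhang.f_mul_h_eq hq rel2) n,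
      geom_sum_eq (inv_ne_one.mpr hq1), zpow_neg, zpow_natCast, ← inv_pow,
      sub_eq_add_neg (_ • h), ← map_neg]
    congr 3
    field_simp
    ring

/-- if `q ≠ 1`, then for every natural number `n`:
`eⁿ·h = (qⁿ·h − 2·(qⁿ − 1)/(q − 1))·eⁿ` and
`fⁿ·h = (q^{−n}·h − 2·(q^{−n} − 1)/(q − 1))·fⁿ` in `A`. -/
theorem jz_powers_twisted_commutation_h {A : Type*} [Ring A] [Algebra ℂ A]
    (q : ℂ) (hq : q ≠ 0) (hq1 : q ≠ 1) (e f h : A)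
    (rel1 : q • (h * e) - e * h = 2 * e)
    (rel2 : h * f - q • (f * h) = -(2 * f))
    (rel3 : e * f - q • (f * e) = h + ((1 - q) / 4) • h ^ 2) :
    ∀ n : ℕ,
      e ^ n * h
        = ((q ^ n) • h - algebraMap ℂ A (2 * (q ^ n - 1) / (q - 1))) * e ^ n ∧
      f ^ n * h
        = ((q ^ (-(n : ℤ))) • h
            - algebraMap ℂ A (2 * (q ^ (-(n : ℤ)) - 1) / (q - 1))) * f ^ n :=
  jz_powers_twisted_commutation_h_general q hq hq1 e f h rel1 rel2
end

section
/- Assume moreover q ≠ 1. For every natural number n, the following identity holds in A: eⁿ·(e·f) = (qⁿ·(e·f) + (q^{n+1}·(1 − qⁿ)/4)·h² + (q^{n+1}·(qⁿ − 1)/(q − 1))·h − (qⁿ − 1)·(q^{n+1} − 1)/(q − 1)²)·eⁿ. -/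
/-!
From `q h e - e h = 2 e` we get `e h = (q h - 2) e`, and then, using `e f = q f e + h + c h²` with `c = (1 - q)/4`,
`e (e f) = (q (e f) + (q h - 2) + c (q h - 2)²) e`. Hence moving `e` from the left to the right
of a combination of `e f`, `h²`, `h` and `1` yields another such combination. The element
multiplying `eⁿ` in the theorem is the `n`-th iterate of this substitution starting from `e f`,
which is checked by comparing coefficients.
-/

theorem SemiconjBy.pow_left_of_forall_succ {M : Type*} [Monoid M] {a : M} {x : ℕ → M}
    (h : ∀ n, SemiconjBy a (x n) (x (n + 1))) (n : ℕ) : SemiconjBy (a ^ n) (x 0) (x n) := by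
  induction n with
  | zero => rw [pow_zero]; exact SemiconjBy.one_left _
  | succ n ih => rw [pow_succ']; exact (h n).mul_left ih

theorem ofNat_two_eq_smul_one {K A : Type*} [Semiring K] [Semiring A] [Module K A] :
    (2 : A) = (2 : K) • 1 := by
  rw [two_smul, one_add_one_eq_two]

section TwistedCommutation

variable {R A : Type*} [CommRing R] [Ring A] [Algebra R A] {q : R} {e f h : A}

theorem smul_sub_two_sq (q : R) (h : A) :
    (q • h - 2) ^ 2 = q ^ 2 • h ^ 2 - (4 * q) • h + (4 : R) • 1 := by
  rw [ofNat_two_eq_smul_one (K := R) (A := A), sq, sq h]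
  simp only [sub_mul, mul_sub, smul_mul_smul_comm, mul_one, one_mul]
  match_scalars <;> ring

theorem semiconjBy_of_smul_mul_sub_mul_eq (rel1 : q • (h * e) - e * h = 2 * e) :
    SemiconjBy e h (q • h - 2) := by
  rw [SemiconjBy, sub_mul, smul_mul_assoc, ← rel1]
  abel

theorem semiconjBy_mul_of_mul_sub_smul_mul_eq {c : R} (rel1 : q • (h * e) - e * h = 2 * e)
    (rel3 : e * f - q • (f * e) = h + c • h ^ 2) :
    SemiconjBy e (e * f) (q • (e * f) + (q • h - 2) + c • (q • h - 2) ^ 2) := by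
  have hh := semiconjBy_of_smul_mul_sub_mul_eq rel1
  calc e * (e * f) = e * (q • (f * e) + h + c • h ^ 2) := by
        rw [add_assoc, ← rel3, add_sub_cancel]
    _ = q • (e * f * e) + e * h + c • (e * h ^ 2) := by
        rw [mul_add, mul_add, mul_smul_comm, mul_smul_comm, mul_assoc]
    _ = _ := by
        rw [hh.eq, (hh.pow_right 2).eq, add_mul, add_mul, smul_mul_assoc, smul_mul_assoc]

end TwistedCommutation

section JingZhang

variable {K A : Type*} [Field K] [Ring A] [Algebra K A]

def twistedEF (q : K) (e f h : A) (n : ℕ) : A :=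
  (q ^ n) • (e * f) + (q ^ (n + 1) * (1 - q ^ n) / 4) • h ^ 2
    + (q ^ (n + 1) * (q ^ n - 1) / (q - 1)) • h
    - algebraMap K A ((q ^ n - 1) * (q ^ (n + 1) - 1) / (q - 1) ^ 2)

theorem twistedEF_zero (q : K) (e f h : A) : twistedEF q e f h 0 = e * f := by
  simp [twistedEF]

theorem semiconjBy_twistedEF_succ [CharZero K] {q : K} (hq1 : q ≠ 1) {e f h : A}
    (rel1 : q • (h * e) - e * h = 2 * e)
    (rel3 : e * f - q • (f * e) = h + ((1 - q) / 4) • h ^ 2) (n : ℕ) :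
    SemiconjBy e (twistedEF q e f h n) (twistedEF q e f h (n + 1)) := by
  have hh := semiconjBy_of_smul_mul_sub_mul_eq rel1
  have hef := semiconjBy_mul_of_mul_sub_smul_mul_eq rel1 rel3
  have := (((hef.smul_right (q ^ n)).add_right
    ((hh.pow_right 2).smul_right (q ^ (n + 1) * (1 - q ^ n) / 4))).add_right
    (hh.smul_right (q ^ (n + 1) * (q ^ n - 1) / (q - 1)))).sub_right
    (Algebra.commutes ((q ^ n - 1) * (q ^ (n + 1) - 1) / (q - 1) ^ 2) e).symm
  unfold twistedEF
  convert this using 1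
  have hq1' : q - 1 ≠ 0 := sub_ne_zero.mpr hq1
  rw [smul_sub_two_sq, ofNat_two_eq_smul_one (K := K) (A := A)]
  simp only [Algebra.algebraMap_eq_smul_one, smul_add, smul_sub, smul_smul]
  match_scalars <;> field_simp <;> ring

end JingZhang

theorem jz_powers_twisted_commutation_ef_general {A : Type*} [Ring A] [Algebra ℂ A]
    (q : ℂ) (hq1 : q ≠ 1) (e f h : A)
    (rel1 : q • (h * e) - e * h = 2 * e)
    (rel3 : e * f - q • (f * e) = h + ((1 - q) / 4) • h ^ 2) :
    ∀ n : ℕ,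
      e ^ n * (e * f)
        = ((q ^ n) • (e * f) + (q ^ (n + 1) * (1 - q ^ n) / 4) • h ^ 2
            + (q ^ (n + 1) * (q ^ n - 1) / (q - 1)) • h
            - algebraMap ℂ A ((q ^ n - 1) * (q ^ (n + 1) - 1) / (q - 1) ^ 2))
          * e ^ n := by
  intro n
  have h_conj := SemiconjBy.pow_left_of_forall_succ (semiconjBy_twistedEF_succ hq1 rel1 rel3) n
  rw [twistedEF_zero] at h_conj
  exact h_conj

/-- if `q ≠ 1`, then for every natural number `n`:
`eⁿ·(e·f) = (qⁿ·(e·f) + (q^{n+1}·(1 − qⁿ)/4)·h² + (q^{n+1}·(qⁿ − 1)/(q − 1))·h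
             − (qⁿ − 1)·(q^{n+1} − 1)/(q − 1)²)·eⁿ` in `A`. -/
theorem jz_powers_twisted_commutation_ef {A : Type*} [Ring A] [Algebra ℂ A]
    (q : ℂ) (hq : q ≠ 0) (hq1 : q ≠ 1) (e f h : A)
    (rel1 : q • (h * e) - e * h = 2 * e)
    (rel2 : h * f - q • (f * h) = -(2 * f))
    (rel3 : e * f - q • (f * e) = h + ((1 - q) / 4) • h ^ 2) :
    ∀ n : ℕ,
      e ^ n * (e * f)
        = ((q ^ n) • (e * f) + (q ^ (n + 1) * (1 - q ^ n) / 4) • h ^ 2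
            + (q ^ (n + 1) * (q ^ n - 1) / (q - 1)) • h
            - algebraMap ℂ A ((q ^ n - 1) * (q ^ (n + 1) - 1) / (q - 1) ^ 2))
          * e ^ n :=
  jz_powers_twisted_commutation_ef_general q hq1 e f h rel1 rel3
end

section
/- Assume q is not a root of unity (in particular q ≠ 0, 1). Let α, β ∈ ℂ and let P = (ξ − α, h − β) be the (maximal) ideal of R generated by ξ − α and h − β. Then the θ-orbit {θⁿ(P) : n ∈ ℤ} of P is a finite set if and only if α = −1/(q − 1)² and β = 2/(q − 1). -/
open MvPolynomial

/-- assume `q` is not a root of unity (in particular `q ≠ 0, 1`).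
For `α, β ∈ ℂ`, the θ-orbit `{θⁿ(P) : n ∈ ℤ}` of the maximal ideal
`P = (ξ − α, h − β)` of `R = ℂ[ξ, h]` (with `ξ = X 0`, `h = X 1`) is finite
if and only if `α = −1/(q − 1)²` and `β = 2/(q − 1)`. -/
theorem jz_theta_orbit_finite_iff (q : ℂ) (hq : q ≠ 0) (hq1 : q ≠ 1)
    (hroot : ∀ m : ℕ, 0 < m → q ^ m ≠ 1)
    (θ : MvPolynomial (Fin 2) ℂ ≃ₐ[ℂ] MvPolynomial (Fin 2) ℂ)
    (hθh : θ (X 1) = q • X 1 - 2)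
    (hθξ : θ (X 0) = q • X 0 + q ^ 2 • X 1 + ((q ^ 2 - q ^ 3) / 4) • (X 1) ^ 2
                - MvPolynomial.C (q + 1))
    (α β : ℂ)
    (P : Ideal (MvPolynomial (Fin 2) ℂ))
    (hP : P = Ideal.span {X 0 - MvPolynomial.C α, X 1 - MvPolynomial.C β}) :
    {I : Ideal (MvPolynomial (Fin 2) ℂ) | ∃ n : ℤ, I = Ideal.map (θ ^ n) P}.Finite
      ↔ (α = -1 / (q - 1) ^ 2 ∧ β = 2 / (q - 1)) := by
  have hq1' : q - 1 ≠ 0 := sub_ne_zero.mpr hq1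
  have hθC : ∀ c : ℂ, θ (MvPolynomial.C c) = MvPolynomial.C c := by
    intro c
    rw [← MvPolynomial.algebraMap_eq]
    exact θ.commutes c
  -- basic facts on Ideal.map of compositions of automorphisms
  have hmapmul : ∀ (σ τ : MvPolynomial (Fin 2) ℂ ≃ₐ[ℂ] MvPolynomial (Fin 2) ℂ)
      (I : Ideal (MvPolynomial (Fin 2) ℂ)),
      Ideal.map (σ * τ) I = Ideal.map σ (Ideal.map τ I) := fun σ τ I =>
    (Ideal.map_map (τ : MvPolynomial (Fin 2) ℂ →+* MvPolynomial (Fin 2) ℂ)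
      (σ : MvPolynomial (Fin 2) ℂ →+* MvPolynomial (Fin 2) ℂ)).symm
  have hmapone : ∀ I : Ideal (MvPolynomial (Fin 2) ℂ),
      Ideal.map (1 : MvPolynomial (Fin 2) ℂ ≃ₐ[ℂ] MvPolynomial (Fin 2) ℂ) I = I := by
    intro I
    simpa [Ideal.map, Set.image_id,
      show ⇑(1 : MvPolynomial (Fin 2) ℂ ≃ₐ[ℂ] MvPolynomial (Fin 2) ℂ) = id from rfl]
      using Ideal.span_eq I
  -- the dynamics on points
  set φ : (Fin 2 → ℂ) → (Fin 2 → ℂ) := fun w =>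
    ![q * w 0 + q ^ 2 * w 1 + (q ^ 2 - q ^ 3) / 4 * (w 1) ^ 2 - (q + 1), q * w 1 - 2] with hφ
  have hstep : ∀ (w : Fin 2 → ℂ) (f : MvPolynomial (Fin 2) ℂ),
      aeval w (θ f) = aeval (φ w) f := by
    intro w
    have key : (aeval w).comp θ.toAlgHom = aeval (φ w) := by
      apply MvPolynomial.algHom_ext
      intro i
      fin_cases i
      · simp [hθξ, hφ, smul_eq_C_mul]
      · simp [hθh, hφ, smul_eq_C_mul]
    intro f
    exact DFunLike.congr_fun key f
  have hiter : ∀ (k : ℕ) (w : Fin 2 → ℂ) (f : MvPolynomial (Fin 2) ℂ),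
      aeval w ((θ ^ k) f) = aeval (φ^[k] w) f := by
    intro k
    induction k with
    | zero => intro w f; simp
    | succ k ih =>
      intro w f
      have h1 : (θ ^ (k + 1)) f = (θ ^ k) (θ f) := by
        rw [pow_succ]; rfl
      rw [h1, ih, Function.iterate_succ_apply', hstep]
  -- invariants of the dynamics (denominator-cleared)
  have hU : ∀ (k : ℕ) (w : Fin 2 → ℂ),
      (q - 1) * (φ^[k] w 1) - 2 = q ^ k * ((q - 1) * w 1 - 2) := by
    intro k
    induction k with
    | zero => intro w; simp
    | succ k ih =>
      intro w
      rw [Function.iterate_succ_apply']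
      have h1 : φ (φ^[k] w) 1 = q * (φ^[k] w 1) - 2 := by simp [hφ]
      rw [h1, pow_succ]
      linear_combination q * ih w
  have hW : ∀ (k : ℕ) (w : Fin 2 → ℂ),
      (q - 1) ^ 2 * (φ^[k] w 0) + (q - 1) ^ 2 * q / 4 * (φ^[k] w 1) ^ 2 - (q - 1)
        = q ^ k * ((q - 1) ^ 2 * w 0 + (q - 1) ^ 2 * q / 4 * (w 1) ^ 2 - (q - 1)) := by
    intro k
    induction k with
    | zero => intro w; simp
    | succ k ih =>
      intro w
      rw [Function.iterate_succ_apply']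
      have h1 : φ (φ^[k] w) 1 = q * (φ^[k] w 1) - 2 := by simp [hφ]
      have h0 : φ (φ^[k] w) 0 = q * (φ^[k] w 0) + q ^ 2 * (φ^[k] w 1)
          + (q ^ 2 - q ^ 3) / 4 * (φ^[k] w 1) ^ 2 - (q + 1) := by simp [hφ]
      rw [h1, h0, pow_succ]
      linear_combination q * ih w
  subst hP
  set S : Ideal (MvPolynomial (Fin 2) ℂ) :=
    Ideal.span {X 0 - MvPolynomial.C α, X 1 - MvPolynomial.C β} with hS
  set v : Fin 2 → ℂ := ![α, β] with hv
  constructor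
  · -- forward direction: finite orbit forces the fixed point
    intro hfin
    have hnotinj : ¬ Function.Injective (fun n : ℤ => Ideal.map (θ ^ n) S) := by
      intro hinj
      have hmem : ∀ n : ℤ, (fun n : ℤ => Ideal.map (θ ^ n) S) n
          ∈ {I : Ideal (MvPolynomial (Fin 2) ℂ) | ∃ m : ℤ, I = Ideal.map (θ ^ m) S} :=
        fun n => ⟨n, rfl⟩
      exact (Set.infinite_of_injective_forall_mem hinj hmem) hfin
    rw [Function.not_injective_iff] at hnotinj
    obtain ⟨a, b, hab, hne⟩ := hnotinj
    have h1 : Ideal.map (θ ^ (a - b)) S = S := by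
      have h2 := congrArg (Ideal.map (θ ^ (-b))) hab
      rw [← hmapmul, ← hmapmul, ← zpow_add, ← zpow_add, neg_add_eq_sub, neg_add_cancel,
        zpow_zero] at h2
      rw [h2, hmapone]
    have h1' : Ideal.map (θ ^ (b - a)) S = S := by
      have h2 := congrArg (Ideal.map (θ ^ (b - a))) h1
      rw [← hmapmul, ← zpow_add] at h2
      rw [show b - a + (a - b) = 0 by ring, zpow_zero, hmapone] at h2
      rw [← h2]
    set k : ℕ := (a - b).natAbs with hk
    have kpos : 0 < k := Int.natAbs_pos.mpr (sub_ne_zero.mpr hne)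
    have hkfix : Ideal.map (θ ^ (k : ℕ)) S = S := by
      rcases Int.natAbs_eq (a - b) with he | he
      · rw [show (θ ^ (k : ℕ)) = θ ^ ((k : ℤ)) from (zpow_natCast θ k).symm, ← he]
        exact h1
      · rw [show (θ ^ (k : ℕ)) = θ ^ ((k : ℤ)) from (zpow_natCast θ k).symm,
          show ((k : ℤ)) = b - a by omega]
        exact h1'
    have hkerS : ∀ p ∈ S, aeval v p = 0 := by
      intro p hp
      have hle : S ≤ RingHom.ker (aeval v : MvPolynomial (Fin 2) ℂ →ₐ[ℂ] ℂ) := by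
        rw [hS, Ideal.span_le]
        rintro x hx
        simp only [Set.mem_insert_iff, Set.mem_singleton_iff] at hx
        rcases hx with rfl | rfl <;>
          simp [RingHom.mem_ker, hv]
      exact hle hp
    have hm0 : (θ ^ (k : ℕ)) (X 0 - MvPolynomial.C α) ∈ S := by
      rw [← hkfix]
      exact Ideal.mem_map_of_mem _ (Ideal.subset_span (Set.mem_insert _ _))
    have hm1 : (θ ^ (k : ℕ)) (X 1 - MvPolynomial.C β) ∈ S := by
      rw [← hkfix]
      exact Ideal.mem_map_of_mem _ (Ideal.subset_span (Set.mem_insert_of_mem _ rfl))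
    have hv1 : φ^[k] v 1 = β := by
      have := hkerS _ hm1
      rw [hiter] at this
      simpa [sub_eq_zero] using this
    have hv0 : φ^[k] v 0 = α := by
      have := hkerS _ hm0
      rw [hiter] at this
      simpa [sub_eq_zero] using this
    have hqk : q ^ k ≠ 1 := hroot k kpos
    have hb0 : (q - 1) * β - 2 = 0 := by
      have hUk := hU k v
      rw [hv1] at hUk
      have hv1' : v 1 = β := by simp [hv]
      rw [hv1'] at hUk
      have hz : ((q - 1) * β - 2) * (1 - q ^ k) = 0 := by linear_combination hUk
      rcases mul_eq_zero.mp hz with h | h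
      · exact h
      · exact absurd (by linear_combination -h : q ^ k = 1) hqk
    have hβ : β = 2 / (q - 1) := by
      field_simp
      linear_combination hb0
    have hw0 : (q - 1) ^ 2 * α + (q - 1) ^ 2 * q / 4 * β ^ 2 - (q - 1) = 0 := by
      have hWk := hW k v
      rw [hv0, hv1] at hWk
      have hv0' : v 0 = α := by simp [hv]
      have hv1' : v 1 = β := by simp [hv]
      rw [hv0', hv1'] at hWk
      have hz : ((q - 1) ^ 2 * α + (q - 1) ^ 2 * q / 4 * β ^ 2 - (q - 1)) * (1 - q ^ k) = 0 := by
        linear_combination hWk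
      rcases mul_eq_zero.mp hz with h | h
      · exact h
      · exact absurd (by linear_combination -h : q ^ k = 1) hqk
    have hb2 : (q - 1) ^ 2 * β ^ 2 = 4 := by
      linear_combination ((q - 1) * β + 2) * hb0
    have hα : α = -1 / (q - 1) ^ 2 := by
      rw [eq_div_iff (pow_ne_zero 2 hq1')]
      linear_combination hw0 - q / 4 * hb2
    exact ⟨hα, hβ⟩
  · -- backward direction: the fixed point has a one-point orbit
    rintro ⟨hα, hβ⟩
    have hb0 : (q - 1) * β = 2 := by rw [hβ]; field_simp
    have hc0 : (q + 1) + α - q * α - q ^ 2 * β - (q ^ 2 - q ^ 3) / 4 * β ^ 2 = 0 := by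
      rw [hα, hβ]; field_simp; ring
    have e1 : θ (X 1 - MvPolynomial.C β)
        = MvPolynomial.C q * (X 1 - MvPolynomial.C β) := by
      rw [map_sub, hθh, smul_eq_C_mul, hθC β]
      have hbC := congrArg (MvPolynomial.C (σ := Fin 2) (R := ℂ)) hb0
      simp only [map_mul, map_sub, map_one, map_ofNat] at hbC
      linear_combination hbC
    have e0 : θ (X 0 - MvPolynomial.C α)
        = MvPolynomial.C q * (X 0 - MvPolynomial.C α)
          + (MvPolynomial.C ((q ^ 2 - q ^ 3) / 4) * X 1
              + MvPolynomial.C ((q ^ 2 - q ^ 3) / 4 * β + q ^ 2))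
            * (X 1 - MvPolynomial.C β) := by
      rw [map_sub, hθξ, smul_eq_C_mul, smul_eq_C_mul, smul_eq_C_mul, hθC α]
      have hcC := congrArg (MvPolynomial.C (σ := Fin 2) (R := ℂ)) hc0
      simp only [map_add, map_sub, map_mul, map_pow, map_one, map_zero, map_ofNat] at hcC
      simp only [map_add, map_mul, map_pow, map_one]
      linear_combination -hcC
    have key1 : Ideal.map θ S = S := by
      rw [hS, Ideal.map_span, Set.image_insert_eq, Set.image_singleton]
      have hg1mem : (X 1 - MvPolynomial.C β : MvPolynomial (Fin 2) ℂ)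
          ∈ Ideal.span {θ (X 0 - MvPolynomial.C α), θ (X 1 - MvPolynomial.C β)} := by
        have hrw : (X 1 - MvPolynomial.C β : MvPolynomial (Fin 2) ℂ)
            = MvPolynomial.C q⁻¹ * θ (X 1 - MvPolynomial.C β) := by
          rw [e1, ← mul_assoc, ← MvPolynomial.C_mul, inv_mul_cancel₀ hq,
            MvPolynomial.C_1, one_mul]
        have hmm := Ideal.mul_mem_left
          (Ideal.span {θ (X 0 - MvPolynomial.C α), θ (X 1 - MvPolynomial.C β)})
          (MvPolynomial.C q⁻¹)
          (Ideal.subset_span (Set.mem_insert_of_mem _ rfl))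
        rwa [← hrw] at hmm
      apply le_antisymm
      · rw [Ideal.span_le]
        rintro x hx
        simp only [Set.mem_insert_iff, Set.mem_singleton_iff] at hx
        rcases hx with rfl | rfl
        · rw [e0]
          exact Ideal.add_mem _
            (Ideal.mul_mem_left _ _ (Ideal.subset_span (Set.mem_insert _ _)))
            (Ideal.mul_mem_left _ _ (Ideal.subset_span (Set.mem_insert_of_mem _ rfl)))
        · rw [e1]
          exact Ideal.mul_mem_left _ _ (Ideal.subset_span (Set.mem_insert_of_mem _ rfl))
      · rw [Ideal.span_le]
        rintro x hx
        simp only [Set.mem_insert_iff, Set.mem_singleton_iff] at hx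
        rcases hx with rfl | rfl
        · have hrw : (X 0 - MvPolynomial.C α : MvPolynomial (Fin 2) ℂ)
              = MvPolynomial.C q⁻¹ * θ (X 0 - MvPolynomial.C α)
                - MvPolynomial.C q⁻¹ * ((MvPolynomial.C ((q ^ 2 - q ^ 3) / 4) * X 1
                    + MvPolynomial.C ((q ^ 2 - q ^ 3) / 4 * β + q ^ 2))
                  * (X 1 - MvPolynomial.C β)) := by
            rw [e0, mul_add, ← mul_assoc, ← MvPolynomial.C_mul, inv_mul_cancel₀ hq,
              MvPolynomial.C_1, one_mul, add_sub_cancel_right]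
          have hmm := Ideal.sub_mem
            (Ideal.span {θ (X 0 - MvPolynomial.C α), θ (X 1 - MvPolynomial.C β)})
            (Ideal.mul_mem_left _ (MvPolynomial.C q⁻¹)
              (Ideal.subset_span (Set.mem_insert _ _)))
            (Ideal.mul_mem_left _ (MvPolynomial.C q⁻¹)
              (Ideal.mul_mem_left _ (MvPolynomial.C ((q ^ 2 - q ^ 3) / 4) * X 1
                + MvPolynomial.C ((q ^ 2 - q ^ 3) / 4 * β + q ^ 2)) hg1mem))
          rwa [← hrw] at hmm
        · exact hg1mem
    have keyinv : Ideal.map θ⁻¹ S = S := by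
      calc Ideal.map θ⁻¹ S = Ideal.map θ⁻¹ (Ideal.map θ S) := by rw [key1]
        _ = Ideal.map (θ⁻¹ * θ) S := (hmapmul _ _ _).symm
        _ = S := by rw [inv_mul_cancel]; exact hmapone S
    have horb : ∀ n : ℤ, Ideal.map (θ ^ n) S = S := by
      intro n
      induction n using Int.induction_on with
      | zero => rw [zpow_zero]; exact hmapone S
      | succ n ih =>
        rw [show ((n : ℤ) + 1) = (n : ℤ) + 1 from rfl, zpow_add_one, hmapmul, key1, ih]
      | pred n ih =>
        rw [zpow_sub_one, hmapmul, keyinv, ih]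
    have hset : {I : Ideal (MvPolynomial (Fin 2) ℂ) | ∃ n : ℤ, I = Ideal.map (θ ^ n) S}
        = {S} := by
      ext I
      simp only [Set.mem_setOf_eq, Set.mem_singleton_iff]
      constructor
      · rintro ⟨n, rfl⟩; exact horb n
      · rintro rfl; exact ⟨0, (horb 0).symm⟩
    rw [hset]
    exact Set.finite_singleton S
end

section
/- Let n be a nonnegative integer, let r ∈ ℂ satisfy r² = q^{−n} (r plays the role of q^{−s} for the half-integer s = n/2), and set β = 2·(1 + r)/(q − 1) and α = (q^{−n} − 1)/(1 − q) (equivalently, α = β + ((1−q)/4)·β²). Then the left ideal L of U_q(sl_2) generated by e·f − α, h − β, e, and f^{n+1} is a maximal left ideal, and the quotient U_q(sl_2)/L is a simple left U_q(sl_2)-module of ℂ-dimension n + 1. -/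
noncomputable section

open FreeAlgebra

/-- Defining relations of the Jing–Zhang deformation `U_q(sl₂)` inside the free
ℂ-algebra on three generators `e = ι 0`, `f = ι 1`, `h = ι 2`:
`q·h·e − e·h = 2·e`, `h·f − q·f·h = −2·f`, `e·f − q·f·e = h + ((1−q)/4)·h²`. -/
inductive JZRel (q : ℂ) : FreeAlgebra ℂ (Fin 3) → FreeAlgebra ℂ (Fin 3) → Prop
  | rel1 : JZRel q
      (algebraMap ℂ (FreeAlgebra ℂ (Fin 3)) q * (ι ℂ 2 * ι ℂ 0) - ι ℂ 0 * ι ℂ 2)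
      (2 * ι ℂ 0)
  | rel2 : JZRel q
      (ι ℂ 2 * ι ℂ 1 - algebraMap ℂ (FreeAlgebra ℂ (Fin 3)) q * (ι ℂ 1 * ι ℂ 2))
      (-(2 * ι ℂ 1))
  | rel3 : JZRel q
      (ι ℂ 0 * ι ℂ 1 - algebraMap ℂ (FreeAlgebra ℂ (Fin 3)) q * (ι ℂ 1 * ι ℂ 0))
      (ι ℂ 2 + algebraMap ℂ (FreeAlgebra ℂ (Fin 3)) ((1 - q) / 4) * (ι ℂ 2 * ι ℂ 2))

/-- The Jing–Zhang deformation `U_q(sl₂)`: the quotient of the free ℂ-algebra on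
`e, f, h` by the two-sided ideal generated by the defining relations. -/
abbrev JZ (q : ℂ) := RingQuot (JZRel q)

def JZe (q : ℂ) : JZ q := RingQuot.mkAlgHom ℂ (JZRel q) (ι ℂ 0)
def JZf (q : ℂ) : JZ q := RingQuot.mkAlgHom ℂ (JZRel q) (ι ℂ 1)
def JZh (q : ℂ) : JZ q := RingQuot.mkAlgHom ℂ (JZRel q) (ι ℂ 2)


namespace JZaux

variable (q r : ℂ) (n : ℕ)

/-- eigenvalues of `h` -/
def B (k : ℕ) : ℂ := 2 * (q ^ k * r + 1) / (q - 1)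

/-- coefficients for the action of `e` -/
def a (k : ℕ) : ℂ := (q ^ k - 1) * (q - r ^ 2 * q ^ k) / (q * (q - 1) ^ 2)

lemma a_zero : a q r 0 = 0 := by simp [a]

lemma B_succ (hq1 : q - 1 ≠ 0) (k : ℕ) : B q r (k + 1) = q * B q r k - 2 := by
  simp only [B, pow_succ]; field_simp; ring

lemma key (q r x : ℂ) (hq0 : q ≠ 0) (hq1 : q - 1 ≠ 0) :
    (q * x - 1) * (q - r ^ 2 * (q * x)) / (q * (q - 1) ^ 2) =
      q * ((x - 1) * (q - r ^ 2 * x) / (q * (q - 1) ^ 2)) + 2 * (x * r + 1) / (q - 1)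
        + (1 - q) / 4 * (2 * (x * r + 1) / (q - 1)) ^ 2 := by
  have hd : q * (q - 1) ^ 2 ≠ 0 := mul_ne_zero hq0 (pow_ne_zero _ hq1)
  have hd4 : (4 : ℂ) * (q - 1) ^ 2 ≠ 0 := mul_ne_zero (by norm_num) (pow_ne_zero _ hq1)
  have h2 : (1 - q) / 4 * (2 * (x * r + 1) / (q - 1)) ^ 2
      = -((x * r + 1) ^ 2 * (q * (q - 1))) / (q * (q - 1) ^ 2) := by
    rw [div_pow, div_mul_div_comm, div_eq_div_iff hd4 hd]
    ring
  have h3 : 2 * (x * r + 1) / (q - 1) = 2 * (x * r + 1) * (q * (q - 1)) / (q * (q - 1) ^ 2) := by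
    rw [div_eq_div_iff hq1 hd]
    ring
  rw [h2, h3, mul_div_assoc', ← add_div, ← add_div]
  congr 1
  ring

lemma a_succ (hq0 : q ≠ 0) (hq1 : q - 1 ≠ 0) (k : ℕ) :
    a q r (k + 1) = q * a q r k + B q r k + (1 - q) / 4 * (B q r k) ^ 2 := by
  have := key q r (q ^ k) hq0 hq1
  simpa [a, B, pow_succ, mul_comm, mul_left_comm, mul_assoc] using this

variable {q r n}

lemma r2 (hq0 : q ≠ 0) (hr : r ^ 2 = q ^ (-(n : ℤ))) : r ^ 2 * q ^ n = 1 := by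
  rw [hr, zpow_neg, zpow_natCast, inv_mul_cancel₀ (pow_ne_zero _ hq0)]

lemma a_np1 (hq0 : q ≠ 0) (hr : r ^ 2 = q ^ (-(n : ℤ))) : a q r (n + 1) = 0 := by
  have h := r2 hq0 hr
  have : q - r ^ 2 * q ^ (n + 1) = 0 := by
    rw [pow_succ q n, ← mul_assoc, h, one_mul, sub_self]
  simp [a, this]

lemma a_one (hq0 : q ≠ 0) (hq1 : q - 1 ≠ 0) (hr : r ^ 2 = q ^ (-(n : ℤ))) :
    a q r 1 = (q ^ (-(n : ℤ)) - 1) / (1 - q) := by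
  have h := r2 hq0 hr
  have hqn : (q : ℂ) ^ n ≠ 0 := pow_ne_zero _ hq0
  rw [← hr]
  have hr2 : r ^ 2 = (q ^ n)⁻¹ := by
    field_simp at h ⊢; linear_combination h
  rw [a, hr2]
  have h1q : (1 : ℂ) - q ≠ 0 := by intro h'; apply hq1; linear_combination -h'
  field_simp
  ring

lemma a_ne (hq0 : q ≠ 0) (hq : ∀ m : ℕ, 0 < m → q ^ m ≠ 1)
    (hr : r ^ 2 = q ^ (-(n : ℤ))) {k : ℕ} (hk1 : 1 ≤ k) (hkn : k ≤ n) :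
    a q r k ≠ 0 := by
  have hq1 : q - 1 ≠ 0 := sub_ne_zero.2 (by simpa using hq 1 one_pos)
  have h1 : q ^ k - 1 ≠ 0 := sub_ne_zero.2 (hq k hk1)
  have h2 : q - r ^ 2 * q ^ k ≠ 0 := by
    intro h
    have hr2 := r2 hq0 hr
    have : q ^ (n + 1 - k) = 1 := by
      have hkn1 : k ≤ n + 1 := hkn.trans (Nat.le_succ n)
      have hpow : q ^ k * q ^ (n + 1 - k) = q ^ (n + 1) := by
        rw [← pow_add, Nat.add_sub_cancel' hkn1]
      have hq' : q = r ^ 2 * q ^ k := by linear_combination h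
      have hqk : (q : ℂ) ^ k ≠ 0 := pow_ne_zero _ hq0
      have : r ^ 2 * (q ^ k * q ^ (n + 1 - k)) = r ^ 2 * q ^ (n + 1) := by rw [hpow]
      have h3 : r ^ 2 * q ^ (n + 1) = q := by
        rw [pow_succ q n, ← mul_assoc, hr2, one_mul]
      -- q ^ k * q ^ (n+1-k) = q^(n+1);  r^2 q^(n+1) = q = r^2 q^k
      -- so r^2 q^k q^(n+1-k) = r^2 q^k, cancel
      have h4 : r ^ 2 * q ^ k * q ^ (n + 1 - k) = r ^ 2 * q ^ k := by
        rw [mul_assoc, hpow, h3, ← hq']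
      have hr2k : r ^ 2 * q ^ k ≠ 0 := by rw [← hq']; exact hq0
      exact mul_left_cancel₀ hr2k (by rw [mul_one]; exact h4)
    exact hq (n + 1 - k) (by omega) this
  intro hEq
  rw [a, div_eq_zero_iff] at hEq
  rcases hEq with h | h
  · rcases mul_eq_zero.1 h with h | h
    exacts [h1 h, h2 h]
  · rcases mul_eq_zero.1 h with h | h
    exacts [hq0 h, pow_ne_zero 2 hq1 h]

section Maps

variable (q r : ℂ) (n : ℕ)

/-- extension of a vector by zero -/
def cf (x : Fin (n + 1) → ℂ) (m : ℕ) : ℂ := if h : m < n + 1 then x ⟨m, h⟩ else 0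

lemma cf_add (x y : Fin (n + 1) → ℂ) (m : ℕ) :
    cf n (x + y) m = cf n x m + cf n y m := by
  unfold cf; split <;> simp

lemma cf_smul (c : ℂ) (x : Fin (n + 1) → ℂ) (m : ℕ) :
    cf n (c • x) m = c * cf n x m := by
  unfold cf; split <;> simp

lemma cf_apply (x : Fin (n + 1) → ℂ) (j : Fin (n + 1)) : cf n x (j : ℕ) = x j := by
  unfold cf
  rw [dif_pos j.isLt]

/-- action of `e` -/
def Emap : Module.End ℂ (Fin (n + 1) → ℂ) where
  toFun x j := a q r ((j : ℕ) + 1) * cf n x ((j : ℕ) + 1)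
  map_add' x y := by funext j; simp [cf_add]; ring
  map_smul' c x := by funext j; simp [cf_smul]; ring

/-- action of `f` -/
def Fmap : Module.End ℂ (Fin (n + 1) → ℂ) where
  toFun x j := if (j : ℕ) = 0 then 0 else cf n x ((j : ℕ) - 1)
  map_add' x y := by funext j; by_cases h : j = 0 <;> simp [h, cf_add]
  map_smul' c x := by funext j; by_cases h : j = 0 <;> simp [h, cf_smul]

/-- action of `h` -/
def Hmap : Module.End ℂ (Fin (n + 1) → ℂ) where
  toFun x j := B q r (j : ℕ) * x j
  map_add' x y := by funext j; simp; ring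
  map_smul' c x := by funext j; simp; ring

/-- basis vectors, extended by zero beyond index `n` -/
def sing (m : ℕ) : Fin (n + 1) → ℂ := fun j => if (j : ℕ) = m then 1 else 0

lemma sing_big {m : ℕ} (hm : n < m) : sing n m = 0 := by
  funext j
  have : (j : ℕ) ≠ m := by omega
  simp [sing, this]

lemma cf_sing (m t : ℕ) : cf n (sing n m) t = if t = m ∧ t < n + 1 then 1 else 0 := by
  unfold cf sing
  by_cases h : t < n + 1
  · rw [dif_pos h]
    by_cases ht : t = m
    · subst ht; simp [h]
    · simp [ht]
  · rw [dif_neg h, if_neg (by omega)]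

lemma Fmap_sing (m : ℕ) : Fmap n (sing n m) = sing n (m + 1) := by
  funext j
  have hj := j.isLt
  show (if (j : ℕ) = 0 then 0 else cf n (sing n m) ((j : ℕ) - 1)) = _
  rw [cf_sing]
  unfold sing
  split_ifs <;> first | rfl | (exfalso; omega)

lemma Hmap_sing (m : ℕ) : Hmap q r n (sing n m) = B q r m • sing n m := by
  funext j
  show B q r (j : ℕ) * sing n m j = B q r m * sing n m j
  unfold sing
  by_cases h : (j : ℕ) = m <;> simp [h]

lemma Emap_sing_zero : Emap q r n (sing n 0) = 0 := by
  funext j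
  show a q r ((j : ℕ) + 1) * cf n (sing n 0) ((j : ℕ) + 1) = 0
  rw [cf_sing, if_neg (by omega), mul_zero]

lemma Emap_sing (hq0 : q ≠ 0) (hr : r ^ 2 = q ^ (-(n : ℤ))) (m : ℕ) :
    Emap q r n (sing n (m + 1)) = a q r (m + 1) • sing n m := by
  funext j
  show a q r ((j : ℕ) + 1) * cf n (sing n (m + 1)) ((j : ℕ) + 1)
      = a q r (m + 1) * sing n m j
  rw [cf_sing]
  unfold sing
  by_cases hm : (j : ℕ) = m
  · by_cases hlt : (j : ℕ) + 1 < n + 1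
    · rw [if_pos (show (j : ℕ) + 1 = m + 1 ∧ (j : ℕ) + 1 < n + 1 from ⟨by omega, hlt⟩),
        if_pos hm, hm]
    · have hj := j.isLt
      have hm1 : m + 1 = n + 1 := by omega
      rw [if_neg (show ¬((j : ℕ) + 1 = m + 1 ∧ (j : ℕ) + 1 < n + 1) by omega),
        if_pos hm, mul_zero, mul_one, hm1, a_np1 hq0 hr]
  · rw [if_neg (show ¬((j : ℕ) + 1 = m + 1 ∧ (j : ℕ) + 1 < n + 1) by omega),
      if_neg hm, mul_zero, mul_zero]

lemma cf_Hmap (x : Fin (n + 1) → ℂ) (t : ℕ) :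
    cf n (Hmap q r n x) t = B q r t * cf n x t := by
  unfold cf
  by_cases h : t < n + 1
  · rw [dif_pos h, dif_pos h]; rfl
  · rw [dif_neg h, dif_neg h, mul_zero]

lemma cf_Emap (x : Fin (n + 1) → ℂ) (t : ℕ) :
    cf n (Emap q r n x) t = a q r (t + 1) * cf n x (t + 1) := by
  unfold cf
  by_cases h : t < n + 1
  · rw [dif_pos h]; rfl
  · rw [dif_neg h]
    have : ¬(t + 1 < n + 1) := by omega
    rw [dif_neg this, mul_zero]

lemma EF_coord (hq0 : q ≠ 0) (hr : r ^ 2 = q ^ (-(n : ℤ))) (x : Fin (n + 1) → ℂ) (t : ℕ) :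
    a q r (t + 1) * cf n (Fmap n x) (t + 1) = a q r (t + 1) * cf n x t := by
  rcases lt_trichotomy t n with h | h | h
  · have h1 : t + 1 < n + 1 := by omega
    have : cf n (Fmap n x) (t + 1) = cf n x t := by
      unfold cf
      rw [dif_pos h1, dif_pos (by omega)]
      show (if (t + 1 : ℕ) = 0 then 0 else cf n x (t + 1 - 1)) = _
      rw [if_neg (by omega)]
      unfold cf
      rw [dif_pos (by omega)]
      congr 1
    rw [this]
  · subst h
    rw [a_np1 hq0 hr, zero_mul, zero_mul]
  · have h1 : ¬(t + 1 < n + 1) := by omega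
    have h2 : ¬(t < n + 1) := by omega
    unfold cf
    rw [dif_neg h1, dif_neg h2]

lemma FE_coord (x : Fin (n + 1) → ℂ) (j : Fin (n + 1)) :
    Fmap n (Emap q r n x) j = a q r (j : ℕ) * cf n x (j : ℕ) := by
  show (if (j : ℕ) = 0 then 0 else cf n (Emap q r n x) ((j : ℕ) - 1)) = _
  by_cases h : (j : ℕ) = 0
  · rw [if_pos h, h, a_zero, zero_mul]
  · have hj : (j : ℕ) - 1 + 1 = (j : ℕ) := by omega
    rw [if_neg h, cf_Emap, hj]

lemma relEnd1 (hq1 : q - 1 ≠ 0) :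
    algebraMap ℂ (Module.End ℂ (Fin (n + 1) → ℂ)) q * (Hmap q r n * Emap q r n)
      - Emap q r n * Hmap q r n = 2 * Emap q r n := by
  refine LinearMap.ext fun x => funext fun j => ?_
  have h1 : Hmap q r n (Emap q r n x) j
      = B q r (j : ℕ) * (a q r ((j : ℕ) + 1) * cf n x ((j : ℕ) + 1)) := rfl
  have h2 : Emap q r n (Hmap q r n x) j
      = a q r ((j : ℕ) + 1) * (B q r ((j : ℕ) + 1) * cf n x ((j : ℕ) + 1)) := by
    show a q r ((j : ℕ) + 1) * cf n (Hmap q r n x) ((j : ℕ) + 1) = _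
    rw [cf_Hmap]
  simp only [Module.End.mul_apply, LinearMap.sub_apply, Pi.sub_apply, LinearMap.add_apply, Pi.add_apply, LinearMap.neg_apply, Pi.neg_apply, Module.algebraMap_end_apply, Pi.smul_apply, smul_eq_mul, Module.End.ofNat_apply, nsmul_eq_mul, Nat.cast_ofNat, h1, h2]
  show q * (B q r (j : ℕ) * (a q r ((j : ℕ) + 1) * cf n x ((j : ℕ) + 1)))
      - a q r ((j : ℕ) + 1) * (B q r ((j : ℕ) + 1) * cf n x ((j : ℕ) + 1))
      = 2 * (a q r ((j : ℕ) + 1) * cf n x ((j : ℕ) + 1))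
  rw [B_succ q r hq1]
  ring

lemma relEnd2 (hq1 : q - 1 ≠ 0) :
    Hmap q r n * Fmap n
      - algebraMap ℂ (Module.End ℂ (Fin (n + 1) → ℂ)) q * (Fmap n * Hmap q r n)
      = -(2 * Fmap n) := by
  refine LinearMap.ext fun x => funext fun j => ?_
  have h1 : Hmap q r n (Fmap n x) j
      = B q r (j : ℕ) * (if (j : ℕ) = 0 then 0 else cf n x ((j : ℕ) - 1)) := rfl
  have h2 : Fmap n (Hmap q r n x) j
      = (if (j : ℕ) = 0 then 0 else B q r ((j : ℕ) - 1) * cf n x ((j : ℕ) - 1)) := by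
    show (if (j : ℕ) = 0 then 0 else cf n (Hmap q r n x) ((j : ℕ) - 1)) = _
    by_cases h : (j : ℕ) = 0
    · rw [if_pos h, if_pos h]
    · rw [if_neg h, if_neg h, cf_Hmap]
  simp only [Module.End.mul_apply, LinearMap.sub_apply, Pi.sub_apply, LinearMap.add_apply, Pi.add_apply, LinearMap.neg_apply, Pi.neg_apply, Module.algebraMap_end_apply, Pi.smul_apply, smul_eq_mul, Module.End.ofNat_apply, nsmul_eq_mul, Nat.cast_ofNat, h1, h2]
  show B q r (j : ℕ) * (if (j : ℕ) = 0 then 0 else cf n x ((j : ℕ) - 1))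
      - q * (if (j : ℕ) = 0 then 0 else B q r ((j : ℕ) - 1) * cf n x ((j : ℕ) - 1))
      = -(2 * (if (j : ℕ) = 0 then 0 else cf n x ((j : ℕ) - 1)))
  by_cases h : (j : ℕ) = 0
  · rw [if_pos h, if_pos h]; ring
  · obtain ⟨m, hm⟩ := Nat.exists_eq_succ_of_ne_zero h
    rw [if_neg h, if_neg h, hm]
    simp only [Nat.succ_eq_add_one, Nat.add_sub_cancel]
    rw [B_succ q r hq1]
    ring

lemma relEnd3 (hq0 : q ≠ 0) (hq1 : q - 1 ≠ 0) (hr : r ^ 2 = q ^ (-(n : ℤ))) :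
    Emap q r n * Fmap n
      - algebraMap ℂ (Module.End ℂ (Fin (n + 1) → ℂ)) q * (Fmap n * Emap q r n)
      = Hmap q r n + algebraMap ℂ (Module.End ℂ (Fin (n + 1) → ℂ)) ((1 - q) / 4)
          * (Hmap q r n * Hmap q r n) := by
  refine LinearMap.ext fun x => funext fun j => ?_
  have h1 : Emap q r n (Fmap n x) j = a q r ((j : ℕ) + 1) * cf n x (j : ℕ) := by
    show a q r ((j : ℕ) + 1) * cf n (Fmap n x) ((j : ℕ) + 1) = _
    rw [EF_coord q r n hq0 hr]
  have h2 := FE_coord q r n x j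
  have h3 : Hmap q r n (Hmap q r n x) j = B q r (j : ℕ) * (B q r (j : ℕ) * x j) := rfl
  have h4 : Hmap q r n x j = B q r (j : ℕ) * x j := rfl
  have h5 : cf n x (j : ℕ) = x j := cf_apply n x j
  simp only [Module.End.mul_apply, LinearMap.sub_apply, Pi.sub_apply, LinearMap.add_apply, Pi.add_apply, LinearMap.neg_apply, Pi.neg_apply, Module.algebraMap_end_apply, Pi.smul_apply, smul_eq_mul, Module.End.ofNat_apply, nsmul_eq_mul, Nat.cast_ofNat, h1, h2, h3, h4, h5]
  rw [a_succ q r hq0 hq1]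
  ring

end Maps

section Rho

variable (q r : ℂ) (n : ℕ)

def gmap : Fin 3 → Module.End ℂ (Fin (n + 1) → ℂ) := ![Emap q r n, Fmap n, Hmap q r n]

/-- the `(n+1)`-dimensional representation of `JZ q` -/
def rho (hq0 : q ≠ 0) (hq1 : q - 1 ≠ 0) (hr : r ^ 2 = q ^ (-(n : ℤ))) :
    JZ q →ₐ[ℂ] Module.End ℂ (Fin (n + 1) → ℂ) :=
  RingQuot.liftAlgHom ℂ ⟨FreeAlgebra.lift ℂ (gmap q r n), by
    intro x y hxy
    induction hxy with
    | rel1 =>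
      simp only [map_sub, map_mul, map_ofNat, AlgHom.commutes,
        FreeAlgebra.lift_ι_apply, gmap, Matrix.cons_val_zero, Matrix.cons_val_one,
        Matrix.head_cons, Matrix.cons_val_two, Matrix.tail_cons]
      exact relEnd1 q r n hq1
    | rel2 =>
      simp only [map_sub, map_mul, map_ofNat, map_neg, AlgHom.commutes,
        FreeAlgebra.lift_ι_apply, gmap, Matrix.cons_val_zero, Matrix.cons_val_one,
        Matrix.head_cons, Matrix.cons_val_two, Matrix.tail_cons]
      exact relEnd2 q r n hq1
    | rel3 =>
      simp only [map_sub, map_mul, map_add, map_ofNat, AlgHom.commutes,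
        FreeAlgebra.lift_ι_apply, gmap, Matrix.cons_val_zero, Matrix.cons_val_one,
        Matrix.head_cons, Matrix.cons_val_two, Matrix.tail_cons]
      exact relEnd3 q r n hq0 hq1 hr⟩

variable {q r n}
variable (hq0 : q ≠ 0) (hq1 : q - 1 ≠ 0) (hr : r ^ 2 = q ^ (-(n : ℤ)))

lemma rho_e : rho q r n hq0 hq1 hr (JZe q) = Emap q r n := by
  simp [rho, JZe, RingQuot.liftAlgHom_mkAlgHom_apply, FreeAlgebra.lift_ι_apply, gmap]

lemma rho_f : rho q r n hq0 hq1 hr (JZf q) = Fmap n := by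
  simp [rho, JZf, RingQuot.liftAlgHom_mkAlgHom_apply, FreeAlgebra.lift_ι_apply, gmap]

lemma rho_h : rho q r n hq0 hq1 hr (JZh q) = Hmap q r n := by
  simp [rho, JZh, RingQuot.liftAlgHom_mkAlgHom_apply, FreeAlgebra.lift_ι_apply, gmap]

end Rho

section JZid

variable (q : ℂ)

lemma mk_e : RingQuot.mkAlgHom ℂ (JZRel q) (ι ℂ 0) = JZe q := rfl
lemma mk_f : RingQuot.mkAlgHom ℂ (JZRel q) (ι ℂ 1) = JZf q := rfl
lemma mk_h : RingQuot.mkAlgHom ℂ (JZRel q) (ι ℂ 2) = JZh q := rfl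

lemma two_smul_jz (x : JZ q) : (2 : ℂ) • x = 2 * x := by
  rw [Algebra.smul_def, map_ofNat]

lemma jz_hf : JZh q * JZf q = q • (JZf q * JZh q) - (2 : ℂ) • JZf q := by
  have h := RingQuot.mkAlgHom_rel ℂ (JZRel.rel2 (q := q))
  simp only [map_sub, map_mul, map_neg, map_ofNat, AlgHom.commutes,
    mk_e, mk_f, mk_h] at h
  rw [Algebra.smul_def, two_smul_jz]
  rw [sub_eq_iff_eq_add] at h
  rw [h]
  abel

lemma jz_ef : JZe q * JZf q
    = q • (JZf q * JZe q) + JZh q + ((1 - q) / 4) • (JZh q * JZh q) := by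
  have h := RingQuot.mkAlgHom_rel ℂ (JZRel.rel3 (q := q))
  simp only [map_sub, map_mul, map_add, map_ofNat, AlgHom.commutes,
    mk_e, mk_f, mk_h] at h
  rw [Algebra.smul_def, Algebra.smul_def]
  rw [sub_eq_iff_eq_add] at h
  rw [h]
  abel

end JZid

section Sum

variable (n : ℕ)

lemma sing_coord (m : ℕ) (i : Fin (n + 1)) :
    sing n m i = if (i : ℕ) = m then 1 else 0 := rfl

lemma sum_smul_sing (c : Fin (n + 1) → ℂ) :
    (∑ j : Fin (n + 1), c j • sing n (j : ℕ)) = c := by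
  funext i
  rw [Finset.sum_apply]
  have hterm : ∀ j : Fin (n + 1), (c j • sing n (j : ℕ)) i = if j = i then c j else 0 := by
    intro j
    show c j * sing n (j : ℕ) i = _
    rw [sing_coord]
    by_cases hji : j = i
    · rw [if_pos hji, if_pos (by rw [hji]), mul_one]
    · rw [if_neg (fun hc => hji (Fin.ext (by omega))), if_neg hji, mul_zero]
  simp_rw [hterm]
  rw [Finset.sum_ite_eq' Finset.univ i c, if_pos (Finset.mem_univ i)]

end Sum

end JZaux

open JZaux in
/-- for `q` not a root of unity, `n ∈ ℕ`, `r² = q^{−n}`,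
`β = 2·(1 + r)/(q − 1)`, `α = (q^{−n} − 1)/(1 − q)`, the left ideal
`L = (e·f − α, h − β, e, f^{n+1})` of `U_q(sl₂)` is a maximal left ideal and
`U_q(sl₂)/L` is a simple left module of ℂ-dimension `n + 1`. -/
theorem jz_finite_dimensional_simple_quotient (q : ℂ) (hq0 : q ≠ 0)
    (hq : ∀ m : ℕ, 0 < m → q ^ m ≠ 1)
    (n : ℕ) (r : ℂ) (hr : r ^ 2 = q ^ (-(n : ℤ)))
    (β : ℂ) (hβ : β = 2 * (1 + r) / (q - 1))
    (α : ℂ) (hα : α = (q ^ (-(n : ℤ)) - 1) / (1 - q))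
    (L : Ideal (JZ q))
    (hL : L = Ideal.span {JZe q * JZf q - algebraMap ℂ (JZ q) α,
        JZh q - algebraMap ℂ (JZ q) β, JZe q, (JZf q) ^ (n + 1)}) :
    L.IsMaximal ∧ IsSimpleModule (JZ q) (JZ q ⧸ L) ∧
      Module.Finite ℂ (JZ q ⧸ L) ∧ Module.finrank ℂ (JZ q ⧸ L) = n + 1 := by
  have hq1 : q - 1 ≠ 0 := sub_ne_zero.2 (by simpa using hq 1 one_pos)
  have hB0 : B q r 0 = β := by rw [B, hβ]; ring_nf
  have ha1 : a q r 1 = α := by rw [a_one hq0 hq1 hr, hα]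
  set ρ : JZ q →ₐ[ℂ] Module.End ℂ (Fin (n + 1) → ℂ) := rho q r n hq0 hq1 hr with hρ
  set v0 : Fin (n + 1) → ℂ := sing n 0 with hv0
  -- the evaluation map
  set φ : JZ q →ₗ[ℂ] (Fin (n + 1) → ℂ) :=
    { toFun := fun u => ρ u v0
      map_add' := fun u v => by simp only [map_add, LinearMap.add_apply]
      map_smul' := fun c u => by simp only [map_smul, LinearMap.smul_apply, RingHom.id_apply] }
    with hφ
  have hφ_apply : ∀ u : JZ q, φ u = ρ u v0 := fun u => rfl
  -- generator membership in L
  have hgen1 : JZe q * JZf q - algebraMap ℂ (JZ q) α ∈ L := by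
    rw [hL]; exact Ideal.subset_span (by simp)
  have hgen2 : JZh q - algebraMap ℂ (JZ q) β ∈ L := by
    rw [hL]; exact Ideal.subset_span (by simp)
  have hgen3 : JZe q ∈ L := by
    rw [hL]; exact Ideal.subset_span (by simp)
  have hgen4 : (JZf q) ^ (n + 1) ∈ L := by
    rw [hL]; exact Ideal.subset_span (by simp)
  -- closure properties of L
  have hmulL : ∀ (u : JZ q) {x : JZ q}, x ∈ L → u * x ∈ L := fun u x hx => by
    simpa [smul_eq_mul] using L.smul_mem u hx
  have hsmulL : ∀ (c : ℂ) {x : JZ q}, x ∈ L → c • x ∈ L := fun c x hx => by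
    rw [Algebra.smul_def]
    exact hmulL _ hx
  -- h f^j ≡ B_j f^j
  have hfL : ∀ j : ℕ, JZh q * JZf q ^ j - B q r j • JZf q ^ j ∈ L := by
    intro j
    induction j with
    | zero =>
      simpa [pow_zero, mul_one, hB0, Algebra.algebraMap_eq_smul_one] using hgen2
    | succ j ih =>
      have key : JZh q * JZf q ^ (j + 1) - B q r (j + 1) • JZf q ^ (j + 1)
          = q • (JZf q * (JZh q * JZf q ^ j - B q r j • JZf q ^ j)) := by
        rw [B_succ q r hq1, pow_succ' (JZf q) j, ← mul_assoc, jz_hf q]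
        simp only [sub_mul, smul_mul_assoc, mul_assoc, mul_smul_comm, smul_smul,
          smul_sub, smul_add, mul_sub, sub_smul, mul_add, add_mul]
        module
      rw [key]
      exact hsmulL q (hmulL (JZf q) ih)
  -- e f^{j+1} ≡ a_{j+1} f^j
  have efL : ∀ j : ℕ, JZe q * JZf q ^ (j + 1) - a q r (j + 1) • JZf q ^ j ∈ L := by
    intro j
    induction j with
    | zero =>
      simpa [pow_one, pow_zero, ha1, Algebra.algebraMap_eq_smul_one] using hgen1
    | succ j ih =>
      have t2 := hfL (j + 1)
      have t3 : JZh q * (JZh q * JZf q ^ (j + 1)) - (B q r (j + 1)) ^ 2 • JZf q ^ (j + 1) ∈ L := by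
        have e3 : JZh q * (JZh q * JZf q ^ (j + 1)) - (B q r (j + 1)) ^ 2 • JZf q ^ (j + 1)
            = JZh q * (JZh q * JZf q ^ (j + 1) - B q r (j + 1) • JZf q ^ (j + 1))
              + B q r (j + 1) • (JZh q * JZf q ^ (j + 1) - B q r (j + 1) • JZf q ^ (j + 1)) := by
          simp only [mul_sub, mul_smul_comm, smul_sub, smul_smul]
          module
        rw [e3]
        exact L.add_mem (hmulL _ t2) (hsmulL _ t2)
      have hco := a_succ q r hq0 hq1 (j + 1)
      have key : JZe q * JZf q ^ (j + 1 + 1) - a q r (j + 1 + 1) • JZf q ^ (j + 1)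
          = q • (JZf q * (JZe q * JZf q ^ (j + 1) - a q r (j + 1) • JZf q ^ j))
            + (JZh q * JZf q ^ (j + 1) - B q r (j + 1) • JZf q ^ (j + 1))
            + ((1 - q) / 4) • (JZh q * (JZh q * JZf q ^ (j + 1))
                - (B q r (j + 1)) ^ 2 • JZf q ^ (j + 1)) := by
        rw [hco, pow_succ' (JZf q) (j + 1), ← mul_assoc, jz_ef q]
        simp only [pow_succ', add_mul, smul_mul_assoc, mul_assoc, mul_smul_comm, smul_smul,
          smul_sub, smul_add, mul_sub, sub_mul, sub_smul, add_smul, mul_add]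
        module
      rw [key]
      exact L.add_mem (L.add_mem (hsmulL q (hmulL (JZf q) ih)) t2) (hsmulL _ t3)
  -- powers of f acting on v0
  have hφf : ∀ m : ℕ, φ (JZf q ^ m) = sing n m := by
    intro m
    induction m with
    | zero => rw [pow_zero, hφ_apply, map_one]; rfl
    | succ m ih =>
      rw [pow_succ' (JZf q) m, hφ_apply, map_mul, Module.End.mul_apply, rho_f,
        ← hφ_apply, ih, Fmap_sing]
  -- the kernel ideal
  set K : Ideal (JZ q) :=
    { carrier := {u : JZ q | ρ u v0 = 0}
      add_mem' := fun {x y} hx hy => by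
        simp only [Set.mem_setOf_eq, map_add, LinearMap.add_apply] at *
        rw [hx, hy, add_zero]
      zero_mem' := by simp only [Set.mem_setOf_eq, map_zero, LinearMap.zero_apply]
      smul_mem' := fun c x hx => by
        simp only [Set.mem_setOf_eq, smul_eq_mul, map_mul, Module.End.mul_apply] at *
        rw [hx, map_zero] } with hK
  have hmemK : ∀ {u : JZ q}, u ∈ K ↔ ρ u v0 = 0 := fun {u} => Iff.rfl
  -- L is contained in the kernel
  have hLK : L ≤ K := by
    rw [hL, Ideal.span_le]
    rintro y hy
    simp only [Set.mem_insert_iff, Set.mem_singleton_iff] at hy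
    rw [SetLike.mem_coe, hmemK]
    rcases hy with rfl | rfl | rfl | rfl
    · rw [map_sub, map_mul, rho_e, rho_f, AlgHom.commutes]
      show Emap q r n (Fmap n v0) - α • v0 = 0
      rw [hv0, Fmap_sing, Emap_sing q r n hq0 hr 0, ha1, sub_self]
    · rw [map_sub, rho_h, AlgHom.commutes]
      show Hmap q r n v0 - β • v0 = 0
      rw [hv0, Hmap_sing, hB0, sub_self]
    · rw [rho_e]
      exact Emap_sing_zero q r n
    · have := hφf (n + 1)
      rw [hφ_apply] at this
      rw [this]
      exact sing_big n (by omega)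
  -- the spanning submodule
  set T : Submodule ℂ (JZ q) := Submodule.restrictScalars ℂ L ⊔
      Submodule.span ℂ (Set.range fun j : Fin (n + 1) => JZf q ^ (j : ℕ)) with hT
  have hTL : ∀ {x : JZ q}, x ∈ L → x ∈ T := fun hx => Submodule.mem_sup_left hx
  have hTsp : ∀ j : Fin (n + 1), JZf q ^ (j : ℕ) ∈ T := fun j =>
    Submodule.mem_sup_right (Submodule.subset_span ⟨j, rfl⟩)
  have hTpow : ∀ m : ℕ, m ≤ n → JZf q ^ m ∈ T := by
    intro m hm
    simpa using hTsp ⟨m, by omega⟩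
  -- T is stable under left multiplication by the generators
  have hstep : ∀ g ∈ ({JZe q, JZf q, JZh q} : Set (JZ q)), ∀ t ∈ T, g * t ∈ T := by
    intro g hg t ht
    obtain ⟨y, hy, z, hz, rfl⟩ := Submodule.mem_sup.1 ht
    rw [mul_add]
    refine T.add_mem (hTL (hmulL g hy)) ?_
    refine Submodule.span_induction (p := fun z _ => g * z ∈ T) ?_ ?_ ?_ ?_ hz
    · rintro _ ⟨j, rfl⟩
      show g * JZf q ^ (j : ℕ) ∈ T
      simp only [Set.mem_insert_iff, Set.mem_singleton_iff] at hg
      have hjn : (j : ℕ) ≤ n := by omega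
      rcases hg with rfl | rfl | rfl
      · -- e * f^j
        by_cases h0 : (j : ℕ) = 0
        · rw [h0, pow_zero, mul_one]
          exact hTL hgen3
        · obtain ⟨m, hm⟩ := Nat.exists_eq_succ_of_ne_zero h0
          rw [hm]
          have hdec : JZe q * JZf q ^ (m + 1)
              = (JZe q * JZf q ^ (m + 1) - a q r (m + 1) • JZf q ^ m)
                + a q r (m + 1) • JZf q ^ m := by
            abel
          rw [hdec]
          exact T.add_mem (hTL (efL _)) (T.smul_mem _ (hTpow _ (by omega)))
      · -- f * f^j
        rw [← pow_succ' (JZf q) (j : ℕ)]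
        rcases Nat.lt_or_ge (j : ℕ) n with hlt | hge
        · exact hTpow _ (by omega)
        · have : (j : ℕ) = n := by omega
          rw [this]
          exact hTL hgen4
      · -- h * f^j
        have hdec : JZh q * JZf q ^ (j : ℕ)
            = (JZh q * JZf q ^ (j : ℕ) - B q r (j : ℕ) • JZf q ^ (j : ℕ))
              + B q r (j : ℕ) • JZf q ^ (j : ℕ) := by abel
        rw [hdec]
        exact T.add_mem (hTL (hfL _)) (T.smul_mem _ (hTpow _ hjn))
    · show g * (0 : JZ q) ∈ T
      rw [mul_zero]; exact T.zero_mem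
    · intro u v _ _ hu hv
      show g * (u + v) ∈ T
      rw [mul_add]; exact T.add_mem hu hv
    · intro c u _ hu
      show g * (c • u) ∈ T
      rw [mul_smul_comm]; exact T.smul_mem c hu
  -- the generators generate JZ q as an algebra
  have hadj : Algebra.adjoin ℂ ({JZe q, JZf q, JZh q} : Set (JZ q)) = ⊤ := by
    have hset : Set.range ((RingQuot.mkAlgHom ℂ (JZRel q)) ∘ (ι ℂ) : Fin 3 → JZ q)
        = {JZe q, JZf q, JZh q} := by
      ext x
      simp only [Set.mem_range, Function.comp_apply, Set.mem_insert_iff,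
        Set.mem_singleton_iff]
      constructor
      · rintro ⟨i, rfl⟩
        fin_cases i
        · exact Or.inl rfl
        · exact Or.inr (Or.inl rfl)
        · exact Or.inr (Or.inr rfl)
      · rintro (rfl | rfl | rfl)
        exacts [⟨0, rfl⟩, ⟨1, rfl⟩, ⟨2, rfl⟩]
    rw [← hset, Set.range_comp, ← AlgHom.map_adjoin, FreeAlgebra.adjoin_range_ι,
      Algebra.map_top, AlgHom.range_eq_top]
    exact RingQuot.mkAlgHom_surjective ℂ (JZRel q)
  -- every element lies in T
  have hall : ∀ u : JZ q, u ∈ T := by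
    have key : ∀ u : JZ q, u ∈ Algebra.adjoin ℂ ({JZe q, JZf q, JZh q} : Set (JZ q)) →
        ∀ t ∈ T, u * t ∈ T := by
      intro u hu
      induction hu using Algebra.adjoin_induction with
      | mem g hg => exact hstep g hg
      | algebraMap c =>
        intro t ht
        rw [← Algebra.smul_def]
        exact T.smul_mem c ht
      | add u v _ _ hu hv =>
        intro t ht
        rw [add_mul]
        exact T.add_mem (hu t ht) (hv t ht)
      | mul u v _ _ hu hv =>
        intro t ht
        rw [mul_assoc]
        exact hu _ (hv t ht)
    intro u
    have h1 : (1 : JZ q) ∈ T := by simpa using hTpow 0 (Nat.zero_le n)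
    simpa using key u (by rw [hadj]; trivial) 1 h1
  -- kernel is contained in L
  have hKL : ∀ {u : JZ q}, φ u = 0 → u ∈ L := by
    intro u hu
    obtain ⟨y, hy, z, hz, hyz⟩ := Submodule.mem_sup.1 (hall u)
    obtain ⟨c, hc⟩ := (Submodule.mem_span_range_iff_exists_fun ℂ).1 hz
    have hφy : φ y = 0 := hLK hy
    have hφz : φ z = 0 := by
      have h1 : φ u = φ y + φ z := by rw [← map_add, hyz]
      rw [hu, hφy, zero_add] at h1
      exact h1.symm
    have hφz2 : φ z = ∑ j : Fin (n + 1), c j • sing n (j : ℕ) := by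
      rw [← hc, map_sum]
      congr 1
      funext j
      rw [map_smul, hφf]
    have hc0 : c = 0 := by
      have h0 : (0 : Fin (n + 1) → ℂ) = c := by
        rw [← sum_smul_sing n c, ← hφz2, hφz]
      exact h0.symm
    have hz0 : z = 0 := by
      rw [← hc, hc0]
      simp
    rw [← hyz, hz0, add_zero]
    exact hy
  -- L is not the whole ring
  have hne : L ≠ ⊤ := by
    intro htop
    have h1 : φ 1 = 0 := hLK (htop ▸ Submodule.mem_top)
    have h2 : φ 1 = sing n 0 := by simpa using hφf 0
    have : sing n 0 = 0 := h2 ▸ h1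
    have := congrFun this ⟨0, n.succ_pos⟩
    simp [sing] at this
  -- maximality via the simple module
  have hcoatom : IsCoatom L := by
    constructor
    · exact hne
    · intro J hJ
      obtain ⟨u0, hu0J, hu0L⟩ := SetLike.exists_of_lt hJ
      set W : Submodule ℂ (Fin (n + 1) → ℂ) :=
        Submodule.map φ (Submodule.restrictScalars ℂ J) with hW
      have hWmem : ∀ {x}, x ∈ W ↔ ∃ u ∈ J, φ u = x := by
        intro x
        constructor
        · rintro ⟨u, hu, rfl⟩; exact ⟨u, hu, rfl⟩
        · rintro ⟨u, hu, rfl⟩; exact ⟨u, hu, rfl⟩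
      have hWE : ∀ {x}, x ∈ W → Emap q r n x ∈ W := by
        rintro _ ⟨u, hu, rfl⟩
        refine ⟨JZe q * u, ?_, ?_⟩
        · simpa [smul_eq_mul] using J.smul_mem (JZe q) hu
        · rw [hφ_apply, hφ_apply, map_mul, Module.End.mul_apply, rho_e]
      have hWF : ∀ {x}, x ∈ W → Fmap n x ∈ W := by
        rintro _ ⟨u, hu, rfl⟩
        refine ⟨JZf q * u, ?_, ?_⟩
        · simpa [smul_eq_mul] using J.smul_mem (JZf q) hu
        · rw [hφ_apply, hφ_apply, map_mul, Module.End.mul_apply, rho_f]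
      -- descent towards the lowest weight vector
      have hdesc : ∀ k : ℕ, ∀ x, x ∈ W → x ≠ 0 →
          (∀ j : Fin (n + 1), k < (j : ℕ) → x j = 0) → sing n 0 ∈ W := by
        intro k
        induction k with
        | zero =>
          intro x hxW hx0 hbd
          obtain ⟨c0, hc0def⟩ : ∃ c0, c0 = x ⟨0, n.succ_pos⟩ := ⟨_, rfl⟩
          have hxv : x = c0 • sing n 0 := by
            funext j
            by_cases hj : (j : ℕ) = 0
            · have hje : j = ⟨0, n.succ_pos⟩ := Fin.ext hj
              rw [hje]
              show x _ = c0 * sing n 0 ⟨0, n.succ_pos⟩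
              rw [sing_coord, if_pos rfl, mul_one, hc0def]
            · show x j = c0 * sing n 0 j
              rw [sing_coord, if_neg hj, mul_zero]
              exact hbd j (by omega)
          have hcne : c0 ≠ 0 := by
            intro hzero
            exact hx0 (by rw [hxv, hzero, zero_smul])
          have hform : sing n 0 = c0⁻¹ • x := by
            rw [hxv, smul_smul, inv_mul_cancel₀ hcne, one_smul]
          rw [hform]
          exact W.smul_mem _ hxW
        | succ k ih =>
          intro x hxW hx0 hbd
          by_cases hcase : ∀ j : Fin (n + 1), k < (j : ℕ) → x j = 0
          · exact ih x hxW hx0 hcase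
          · push_neg at hcase
            obtain ⟨j1, hj1k, hj1ne⟩ := hcase
            have hj1le : ¬(k + 1 < (j1 : ℕ)) := fun h' => hj1ne (hbd j1 h')
            have hj1 : (j1 : ℕ) = k + 1 := by omega
            have hk1n : k + 1 < n + 1 := by have := j1.isLt; omega
            have hkn : k + 1 ≤ n := by omega
            set y := Emap q r n x with hy
            have hyW : y ∈ W := hWE hxW
            have hyk : y ⟨k, by omega⟩ = a q r (k + 1) * x j1 := by
              show a q r (k + 1) * cf n x (k + 1) = a q r (k + 1) * x j1
              congr 1
              show (if h : k + 1 < n + 1 then x ⟨k + 1, h⟩ else 0) = x j1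
              rw [dif_pos hk1n]
              congr 1
              exact Fin.ext (show k + 1 = (j1 : ℕ) by omega)
            have hane : a q r (k + 1) ≠ 0 := a_ne hq0 hq hr (by omega) hkn
            have hyne : y ≠ 0 := by
              intro h0
              rw [h0] at hyk
              exact mul_ne_zero hane hj1ne hyk.symm
            have hybd : ∀ j : Fin (n + 1), k < (j : ℕ) → y j = 0 := by
              intro j hj
              show a q r ((j : ℕ) + 1) * cf n x ((j : ℕ) + 1) = 0
              have : cf n x ((j : ℕ) + 1) = 0 := by
                unfold cf
                by_cases hlt : (j : ℕ) + 1 < n + 1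
                · rw [dif_pos hlt]
                  exact hbd ⟨(j : ℕ) + 1, hlt⟩ (show k + 1 < (j : ℕ) + 1 by omega)
                · rw [dif_neg hlt]
              rw [this, mul_zero]
            exact ih y hyW hyne hybd
      -- sing n 0 lies in W
      have hx0W : φ u0 ∈ W := ⟨u0, hu0J, rfl⟩
      have hx0ne : φ u0 ≠ 0 := fun h => hu0L (hKL h)
      have hs0 : sing n 0 ∈ W :=
        hdesc n (φ u0) hx0W hx0ne (fun j hj => absurd j.isLt (by omega))
      -- hence 1 ∈ J
      obtain ⟨w, hwJ, hwφ⟩ := hWmem.1 hs0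
      have h1w : (1 : JZ q) - w ∈ L := by
        apply hKL
        rw [map_sub, hwφ]
        have h2 : φ 1 = sing n 0 := by simpa using hφf 0
        rw [h2, sub_self]
      have h1J : (1 : JZ q) ∈ J := by
        have := J.add_mem (hJ.le h1w) hwJ
        simpa using this
      exact (Ideal.eq_top_iff_one J).2 h1J
  have hmax : L.IsMaximal := Ideal.isMaximal_def.2 hcoatom
  have hsimple : IsSimpleModule (JZ q) (JZ q ⧸ L) := isSimpleModule_iff_isCoatom.2 hcoatom
  -- the quotient is isomorphic to the representation space
  have hφsurj : Function.Surjective φ := by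
    intro x
    refine ⟨∑ j : Fin (n + 1), x j • JZf q ^ (j : ℕ), ?_⟩
    calc φ (∑ j : Fin (n + 1), x j • JZf q ^ (j : ℕ))
        = ∑ j : Fin (n + 1), x j • sing n (j : ℕ) := by
          rw [map_sum]
          exact Finset.sum_congr rfl fun j _ => by rw [map_smul, hφf]
      _ = x := sum_smul_sing n x
  have hker : LinearMap.ker φ = Submodule.restrictScalars ℂ L := by
    apply le_antisymm
    · intro u hu
      exact hKL (LinearMap.mem_ker.1 hu)
    · intro u hu
      exact LinearMap.mem_ker.2 (hLK hu)
  have eqv : (JZ q ⧸ Submodule.restrictScalars ℂ L) ≃ₗ[ℂ] (Fin (n + 1) → ℂ) :=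
    (Submodule.quotEquivOfEq _ _ hker.symm).trans (φ.quotKerEquivOfSurjective hφsurj)
  have eqv2 : (JZ q ⧸ L) ≃ₗ[ℂ] (Fin (n + 1) → ℂ) :=
    (Submodule.Quotient.restrictScalarsEquiv ℂ L).symm.trans eqv
  have hfin : Module.Finite ℂ (JZ q ⧸ L) := Module.Finite.equiv eqv2.symm
  have hrank : Module.finrank ℂ (JZ q ⧸ L) = n + 1 := by
    rw [eqv2.finrank_eq]
    simp [Module.finrank_pi]
  exact ⟨hmax, hsimple, hfin, hrank⟩
end
end

section
/- Let β ∈ ℂ satisfy ((q − 1)·β/2 − 1)² ≠ q^{−n} for every nonnegative integer n (i.e., β avoids the highest weights 2·(1 ± q^{−s})/(q − 1) of the finite-dimensional simple modules), and set α = β − ((q − 1)/4)·β². Then the left ideal L of U_q(sl_2) generated by e·f − α, h − β, and e is a maximal left ideal, and the quotient U_q(sl_2)/L is an infinite-dimensional (over ℂ) simple left U_q(sl_2)-module. -/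
noncomputable section
open FreeAlgebra Finsupp

def jzLam (q β : ℂ) : ℕ → ℂ
  | 0 => β
  | k+1 => q * jzLam q β k - 2

def jzC (q β : ℂ) : ℕ → ℂ
  | 0 => 0
  | k+1 => q * jzC q β k + (jzLam q β k + (1-q)/4 * (jzLam q β k)^2)

theorem jzLam_mul (q β : ℂ) (k : ℕ) :
    (q-1) * jzLam q β k = 2*(q^k * ((q-1)*β/2 - 1) + 1) := by
  induction k with
  | zero => simp [jzLam]; ring
  | succ k ih => rw [jzLam]; linear_combination q * ih

theorem jzC_mul (q β : ℂ) (k : ℕ) :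
    (q-1)^2 * jzC q β (k+1) = (q^(k+1) - 1) * (1 - ((q-1)*β/2-1)^2 * q^k) := by
  induction k with
  | zero =>
    rw [jzC, jzC, jzLam]
    ring
  | succ k ih =>
    rw [jzC]
    linear_combination q * ih + ((q-1) + (1-q)/4 * ((q-1)*jzLam q β (k+1)
      + 2*(q^(k+1)*((q-1)*β/2 - 1)+1))) * jzLam_mul q β (k+1)

/-- shift-up operator -/
def opF : Module.End ℂ (ℕ →₀ ℂ) := Finsupp.lmapDomain ℂ ℂ (· + 1)
def opH (q β : ℂ) : Module.End ℂ (ℕ →₀ ℂ) :=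
  Finsupp.lsum ℂ fun k => jzLam q β k • Finsupp.lsingle k
def opE (q β : ℂ) : Module.End ℂ (ℕ →₀ ℂ) :=
  Finsupp.lsum ℂ fun k => Nat.casesOn k 0 fun j => jzC q β (j+1) • Finsupp.lsingle j

@[simp] theorem opF_single (k : ℕ) (a : ℂ) :
    opF (Finsupp.single k a) = Finsupp.single (k+1) a := by
  simp [opF, Finsupp.lmapDomain_apply, Finsupp.mapDomain_single]

@[simp] theorem opH_single (q β : ℂ) (k : ℕ) (a : ℂ) :
    opH q β (Finsupp.single k a) = jzLam q β k • Finsupp.single k a := by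
  simp [opH]

@[simp] theorem opE_single_zero (q β : ℂ) (a : ℂ) :
    opE q β (Finsupp.single 0 a) = 0 := by simp [opE]

@[simp] theorem opE_single_succ (q β : ℂ) (k : ℕ) (a : ℂ) :
    opE q β (Finsupp.single (k+1) a) = jzC q β (k+1) • Finsupp.single k a := by
  simp [opE]

theorem opE_apply (q β : ℂ) (m : ℕ →₀ ℂ) (j : ℕ) :
    opE q β m j = jzC q β (j+1) * m (j+1) := by
  induction m using Finsupp.induction_linear with
  | zero => simp
  | add f g hf hg => simp [hf, hg, mul_add]
  | single k a =>
    cases k with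
    | zero => simp [Finsupp.single_apply]
    | succ k =>
      rcases eq_or_ne k j with rfl | hkj
      · simp [Finsupp.single_apply]
      · simp [Finsupp.single_apply, hkj, (by omega : ¬ k + 1 = j + 1), Ne.symm hkj]

def jzRep (q β : ℂ) : FreeAlgebra ℂ (Fin 3) →ₐ[ℂ] Module.End ℂ (ℕ →₀ ℂ) :=
  FreeAlgebra.lift ℂ ![opE q β, opF, opH q β]

@[simp] theorem jzRep_e (q β : ℂ) : jzRep q β (ι ℂ 0) = opE q β := by
  simp [jzRep]
@[simp] theorem jzRep_f (q β : ℂ) : jzRep q β (ι ℂ 1) = opF := by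
  simp [jzRep]
@[simp] theorem jzRep_h (q β : ℂ) : jzRep q β (ι ℂ 2) = opH q β := by
  simp [jzRep]

theorem jzRep_rel (q β : ℂ) : ∀ ⦃x y⦄, JZRel q x y → jzRep q β x = jzRep q β y := by
  intro x y h
  have h2 : ∀ i : Fin 3, (2 : FreeAlgebra ℂ (Fin 3)) * ι ℂ i = ι ℂ i + ι ℂ i := by
    intro i; rw [two_mul]
  induction h with
  | rel1 =>
    rw [h2]
    simp only [map_sub, map_add, map_mul, AlgHom.commutes, jzRep_e, jzRep_h]
    refine Finsupp.lhom_ext fun k a => ?_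
    cases k <;>
      simp only [LinearMap.sub_apply, LinearMap.add_apply, Module.End.mul_apply,
        Module.algebraMap_end_apply, opE_single_zero, opE_single_succ, opH_single,
        map_smul, map_zero, smul_zero, sub_zero, zero_sub, neg_zero, add_zero,
        Finsupp.smul_single, smul_eq_mul, ← Finsupp.single_sub, ← Finsupp.single_add]
    congr 1
    rw [jzLam]
    ring
  | rel2 =>
    rw [show -((2 : FreeAlgebra ℂ (Fin 3)) * ι ℂ 1) = -(ι ℂ 1 + ι ℂ 1) by rw [h2]]
    simp only [map_sub, map_neg, map_add, map_mul, AlgHom.commutes, jzRep_f, jzRep_h]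
    refine Finsupp.lhom_ext fun k a => ?_
    simp only [LinearMap.sub_apply, LinearMap.neg_apply, LinearMap.add_apply,
      Module.End.mul_apply, Module.algebraMap_end_apply, opF_single, opH_single,
      map_smul, Finsupp.smul_single, smul_eq_mul, ← Finsupp.single_sub,
      ← Finsupp.single_add, ← Finsupp.single_neg]
    congr 1
    rw [jzLam]
    ring
  | rel3 =>
    simp only [map_sub, map_add, map_mul, AlgHom.commutes, jzRep_e, jzRep_f, jzRep_h]
    refine Finsupp.lhom_ext fun k a => ?_
    cases k with
    | zero =>
      simp only [LinearMap.sub_apply, LinearMap.add_apply, Module.End.mul_apply,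
        Module.algebraMap_end_apply, opF_single, opE_single_zero, opE_single_succ,
        opH_single, map_smul, map_zero, smul_zero, sub_zero,
        Finsupp.smul_single, smul_eq_mul, ← Finsupp.single_add]
      congr 1
      rw [show jzC q β 1 = q * jzC q β 0 + (jzLam q β 0 + (1-q)/4 * (jzLam q β 0)^2) from rfl,
        show jzC q β 0 = 0 from rfl]
      ring
    | succ k =>
      simp only [LinearMap.sub_apply, LinearMap.add_apply, Module.End.mul_apply,
        Module.algebraMap_end_apply, opF_single, opE_single_succ, opH_single,
        map_smul, Finsupp.smul_single, smul_eq_mul, ← Finsupp.single_sub,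
        ← Finsupp.single_add]
      congr 1
      rw [show jzC q β (k+1+1) = q * jzC q β (k+1)
        + (jzLam q β (k+1) + (1-q)/4 * (jzLam q β (k+1))^2) from rfl]
      ring

def jzRho (q β : ℂ) : JZ q →ₐ[ℂ] Module.End ℂ (ℕ →₀ ℂ) :=
  RingQuot.liftAlgHom ℂ ⟨jzRep q β, jzRep_rel q β⟩

@[simp] theorem jzRho_e (q β : ℂ) : jzRho q β (JZe q) = opE q β := by
  rw [JZe, jzRho, RingQuot.liftAlgHom_mkAlgHom_apply]; simp
@[simp] theorem jzRho_f (q β : ℂ) : jzRho q β (JZf q) = opF := by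
  rw [JZf, jzRho, RingQuot.liftAlgHom_mkAlgHom_apply]; simp
@[simp] theorem jzRho_h (q β : ℂ) : jzRho q β (JZh q) = opH q β := by
  rw [JZh, jzRho, RingQuot.liftAlgHom_mkAlgHom_apply]; simp
theorem jz_rel_hf (q : ℂ) : JZh q * JZf q = q • (JZf q * JZh q) - (2:ℂ) • JZf q := by
  have h0 := RingQuot.mkAlgHom_rel ℂ (JZRel.rel2 (q := q))
  rw [show (2 : FreeAlgebra ℂ (Fin 3)) * ι ℂ 1 = ι ℂ 1 + ι ℂ 1 by rw [two_mul]] at h0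
  simp only [map_sub, map_neg, map_add, map_mul, AlgHom.commutes] at h0
  rw [sub_eq_iff_eq_add] at h0
  simp only [← Algebra.smul_def] at h0
  simp only [JZh, JZf, h0]
  module

theorem jz_rel_ef (q : ℂ) : JZe q * JZf q = q • (JZf q * JZe q)
    + JZh q + ((1-q)/4) • (JZh q * JZh q) := by
  have h0 := RingQuot.mkAlgHom_rel ℂ (JZRel.rel3 (q := q))
  simp only [map_sub, map_add, map_mul, AlgHom.commutes] at h0
  rw [sub_eq_iff_eq_add] at h0
  simp only [← Algebra.smul_def] at h0
  simp only [JZe, JZf, JZh, h0]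
  module

def jzL (q β α : ℂ) : Ideal (JZ q) :=
  Ideal.span {JZe q * JZf q - algebraMap ℂ (JZ q) α, JZh q - algebraMap ℂ (JZ q) β, JZe q}

theorem jz_mem_e (q β α : ℂ) : JZe q ∈ jzL q β α :=
  Ideal.subset_span (by simp)

theorem jz_mem_h (q β α : ℂ) : JZh q - algebraMap ℂ (JZ q) β ∈ jzL q β α :=
  Ideal.subset_span (by simp)

theorem jz_mem_ef (q β α : ℂ) : JZe q * JZf q - algebraMap ℂ (JZ q) α ∈ jzL q β α :=
  Ideal.subset_span (by simp)

theorem jz_hfk (q β α : ℂ) (k : ℕ) :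
    JZh q * JZf q ^ k - jzLam q β k • JZf q ^ k ∈ jzL q β α := by
  induction k with
  | zero =>
    simpa [jzLam, Algebra.smul_def] using jz_mem_h q β α
  | succ k ih =>
    have key : JZh q * JZf q ^ (k+1) - jzLam q β (k+1) • JZf q ^ (k+1)
        = q • (JZf q * (JZh q * JZf q ^ k - jzLam q β k • JZf q ^ k)) := by
      rw [jzLam]
      simp only [pow_succ', ← mul_assoc, jz_rel_hf]
      simp only [mul_sub, sub_mul, mul_add, add_mul, smul_mul_assoc, mul_smul_comm,
        mul_assoc, smul_sub, smul_add]
      module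
    rw [key]
    exact Submodule.smul_of_tower_mem _ _ (Ideal.mul_mem_left _ _ ih)

theorem jz_efk (q β α : ℂ) (k : ℕ) :
    JZe q * JZf q ^ (k+1) - jzC q β (k+1) • JZf q ^ k ∈ jzL q β α := by
  induction k with
  | zero =>
    have hc : jzC q β 1 = jzLam q β 0 + (1-q)/4 * (jzLam q β 0)^2 := by
      rw [show jzC q β 1 = q * jzC q β 0 + (jzLam q β 0 + (1-q)/4 * (jzLam q β 0)^2) from rfl,
        show jzC q β 0 = 0 from rfl]; ring
    have key : JZe q * JZf q ^ 1 - jzC q β 1 • JZf q ^ 0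
        = q • (JZf q * JZe q)
          + (JZh q - jzLam q β 0 • 1)
          + ((1-q)/4) • (JZh q * (JZh q - jzLam q β 0 • 1))
          + ((1-q)/4 * jzLam q β 0) • (JZh q - jzLam q β 0 • 1) := by
      rw [pow_one, pow_zero, jz_rel_ef, hc]
      simp only [mul_sub, sub_mul, mul_add, add_mul, smul_mul_assoc, mul_smul_comm,
        mul_assoc, smul_sub, smul_add, mul_one]
      module
    rw [key]
    have hh : JZh q - jzLam q β 0 • 1 ∈ jzL q β α := by
      simpa [jzLam, Algebra.smul_def] using jz_mem_h q β α
    refine Submodule.add_mem _ (Submodule.add_mem _ (Submodule.add_mem _ ?_ hh) ?_) ?_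
    · exact Submodule.smul_of_tower_mem _ _ (Ideal.mul_mem_left _ _ (jz_mem_e q β α))
    · exact Submodule.smul_of_tower_mem _ _ (Ideal.mul_mem_left _ _ hh)
    · exact Submodule.smul_of_tower_mem _ _ hh
  | succ k ih =>
    have hf := jz_hfk q β α (k+1)
    have key : JZe q * JZf q ^ (k+2) - jzC q β (k+2) • JZf q ^ (k+1)
        = q • (JZf q * (JZe q * JZf q ^ (k+1) - jzC q β (k+1) • JZf q ^ k))
          + (JZh q * JZf q ^ (k+1) - jzLam q β (k+1) • JZf q ^ (k+1))
          + ((1-q)/4) • (JZh q * (JZh q * JZf q ^ (k+1) - jzLam q β (k+1) • JZf q ^ (k+1)))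
          + ((1-q)/4 * jzLam q β (k+1)) • (JZh q * JZf q ^ (k+1) - jzLam q β (k+1) • JZf q ^ (k+1)) := by
      have hc : jzC q β (k+2) = q * jzC q β (k+1)
          + (jzLam q β (k+1) + (1-q)/4 * (jzLam q β (k+1))^2) := rfl
      have e1 : JZe q * JZf q ^ (k+2) = (JZe q * JZf q) * (JZf q * JZf q ^ k) := by
        rw [pow_succ', pow_succ', ← mul_assoc]
      rw [hc, e1, jz_rel_ef]
      simp only [pow_succ']
      simp only [mul_sub, sub_mul, mul_add, add_mul, smul_mul_assoc, mul_smul_comm,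
        mul_assoc, smul_sub, smul_add]
      module
    rw [key]
    refine Submodule.add_mem _ (Submodule.add_mem _ (Submodule.add_mem _ ?_ hf) ?_) ?_
    · exact Submodule.smul_of_tower_mem _ _ (Ideal.mul_mem_left _ _ ih)
    · exact Submodule.smul_of_tower_mem _ _ (Ideal.mul_mem_left _ _ hf)
    · exact Submodule.smul_of_tower_mem _ _ hf
def jzPsi (q : ℂ) : (ℕ →₀ ℂ) →ₗ[ℂ] JZ q :=
  Finsupp.linearCombination ℂ (fun k => JZf q ^ k)

def jzT (q β α : ℂ) : Submodule ℂ (JZ q) :=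
  (jzL q β α).restrictScalars ℂ ⊔ LinearMap.range (jzPsi q)

theorem jz_fk_mem (q β α : ℂ) (k : ℕ) : JZf q ^ k ∈ jzT q β α := by
  refine Submodule.mem_sup_right ⟨Finsupp.single k 1, ?_⟩
  simp [jzPsi]

theorem jzL_le_T (q β α : ℂ) (x : JZ q) (hx : x ∈ jzL q β α) : x ∈ jzT q β α :=
  Submodule.mem_sup_left hx

theorem jz_mulT (q β α : ℂ) (g : JZ q) (hgL : ∀ k : ℕ, g * JZf q ^ k ∈ jzT q β α) :
    ∀ x ∈ jzT q β α, g * x ∈ jzT q β α := by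
  intro x hx
  obtain ⟨l, hl, r, hr, rfl⟩ := Submodule.mem_sup.mp hx
  rw [mul_add]
  refine Submodule.add_mem _ (jzL_le_T q β α _ (Ideal.mul_mem_left _ _ hl)) ?_
  have hspan : Submodule.span ℂ (Set.range fun k => JZf q ^ k)
      ≤ (jzT q β α).comap (LinearMap.mulLeft ℂ g) := by
    rw [Submodule.span_le]
    rintro _ ⟨k, rfl⟩
    exact hgL k
  have hr' : r ∈ Submodule.span ℂ (Set.range fun k => JZf q ^ k) := by
    rw [← Finsupp.range_linearCombination]
    exact hr
  exact hspan hr'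

theorem jz_span (q β α : ℂ) (u : JZ q) : u ∈ jzT q β α := by
  have key : ∀ u : JZ q, ∀ x ∈ jzT q β α, u * x ∈ jzT q β α := by
    intro u
    obtain ⟨y, rfl⟩ := RingQuot.mkAlgHom_surjective ℂ (JZRel q) u
    induction y using FreeAlgebra.induction with
    | grade0 c =>
      intro x hx
      rw [AlgHom.commutes, ← Algebra.smul_def]
      exact Submodule.smul_mem _ _ hx
    | grade1 i =>
      fin_cases i
      · -- e
        show ∀ x ∈ jzT q β α, JZe q * x ∈ jzT q β α
        refine jz_mulT q β α _ fun k => ?_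
        cases k with
        | zero =>
          simpa using jzL_le_T q β α _ (jz_mem_e q β α)
        | succ k =>
          have := jz_efk q β α k
          have hd : JZe q * JZf q ^ (k+1)
              = (JZe q * JZf q ^ (k+1) - jzC q β (k+1) • JZf q ^ k)
                + jzC q β (k+1) • JZf q ^ k := by abel
          rw [hd]
          exact Submodule.add_mem _ (jzL_le_T q β α _ this)
            (Submodule.smul_mem _ _ (jz_fk_mem q β α k))
      · -- f
        show ∀ x ∈ jzT q β α, JZf q * x ∈ jzT q β α
        refine jz_mulT q β α _ fun k => ?_
        rw [← pow_succ']
        exact jz_fk_mem q β α (k+1)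
      · -- h
        show ∀ x ∈ jzT q β α, JZh q * x ∈ jzT q β α
        refine jz_mulT q β α _ fun k => ?_
        have := jz_hfk q β α k
        have hd : JZh q * JZf q ^ k
            = (JZh q * JZf q ^ k - jzLam q β k • JZf q ^ k) + jzLam q β k • JZf q ^ k := by
          abel
        rw [hd]
        exact Submodule.add_mem _ (jzL_le_T q β α _ this)
          (Submodule.smul_mem _ _ (jz_fk_mem q β α k))
    | mul a b ha hb =>
      intro x hx
      rw [map_mul, mul_assoc]
      exact ha _ (hb x hx)
    | add a b ha hb =>
      intro x hx
      rw [map_add, add_mul]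
      exact Submodule.add_mem _ (ha x hx) (hb x hx)
  have h1 : (1 : JZ q) ∈ jzT q β α := by simpa using jz_fk_mem q β α 0
  simpa using key u 1 h1
/-- for `q` not a root of unity, if `β` satisfies
`((q − 1)·β/2 − 1)² ≠ q^{−n}` for every `n ∈ ℕ` and `α = β − ((q − 1)/4)·β²`,
then the left ideal `L = (e·f − α, h − β, e)` of `U_q(sl₂)` is a maximal left
ideal and `U_q(sl₂)/L` is an infinite-dimensional simple left module. -/
theorem jz_infinite_dimensional_highest_weight_simple (q : ℂ) (hq0 : q ≠ 0)
    (hq : ∀ m : ℕ, 0 < m → q ^ m ≠ 1)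
    (β : ℂ) (hβ : ∀ n : ℕ, ((q - 1) * β / 2 - 1) ^ 2 ≠ q ^ (-(n : ℤ)))
    (α : ℂ) (hα : α = β - ((q - 1) / 4) * β ^ 2)
    (L : Ideal (JZ q))
    (hL : L = Ideal.span {JZe q * JZf q - algebraMap ℂ (JZ q) α,
        JZh q - algebraMap ℂ (JZ q) β, JZe q}) :
    L.IsMaximal ∧ IsSimpleModule (JZ q) (JZ q ⧸ L) ∧
      ¬ Module.Finite ℂ (JZ q ⧸ L) := by
  have hL' : L = jzL q β α := hL
  have hq1 : q - 1 ≠ 0 := sub_ne_zero.mpr fun h => hq 1 one_pos (by rw [pow_one, h])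
  have hccne : ∀ k : ℕ, jzC q β (k+1) ≠ 0 := by
    intro k hC
    have hmul := jzC_mul q β k
    rw [hC, mul_zero] at hmul
    rcases mul_eq_zero.mp hmul.symm with h1 | h2
    · exact hq (k+1) (Nat.succ_pos k) (sub_eq_zero.mp h1)
    · have h3 : ((q-1)*β/2-1)^2 * q^k = 1 := by linear_combination -h2
      have h4 : ((q-1)*β/2-1)^2 = (q^k)⁻¹ := eq_inv_of_mul_eq_one_left h3
      exact hβ k (by rw [h4, zpow_neg, zpow_natCast])
  have hC1 : jzC q β 1 = α := by
    rw [show jzC q β 1 = q * jzC q β 0 + (jzLam q β 0 + (1-q)/4 * (jzLam q β 0)^2) from rfl,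
      show jzC q β 0 = 0 from rfl, show jzLam q β 0 = β from rfl, hα]
    ring
  -- the Verma module structure
  letI : Module (JZ q) (ℕ →₀ ℂ) := Module.compHom _ (jzRho q β).toRingHom
  have smul_def : ∀ (u : JZ q) (m : ℕ →₀ ℂ), u • m = jzRho q β u m := fun _ _ => rfl
  have halg : ∀ (c : ℂ) (m : ℕ →₀ ℂ), (algebraMap ℂ (JZ q) c) • m = c • m := by
    intro c m
    rw [smul_def, AlgHom.commutes]
    simp [Module.algebraMap_end_apply]
  set v0 : ℕ →₀ ℂ := Finsupp.single 0 1 with hv0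
  set φ : JZ q →ₗ[JZ q] (ℕ →₀ ℂ) := LinearMap.toSpanSingleton (JZ q) _ v0 with hφdef
  have hφ : ∀ u, φ u = jzRho q β u v0 := fun u => rfl
  have hfkv : ∀ k : ℕ, jzRho q β (JZf q ^ k) v0 = Finsupp.single k 1 := by
    intro k
    rw [map_pow]
    induction k with
    | zero => simp [hv0]
    | succ k ih => rw [pow_succ', Module.End.mul_apply, ih, jzRho_f, opF_single]
  have heval : ∀ a : ℕ →₀ ℂ, jzRho q β (jzPsi q a) v0 = a := by
    intro a
    induction a using Finsupp.induction_linear with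
    | zero => simp [jzPsi]
    | add f g hf hg => rw [map_add, map_add, LinearMap.add_apply, hf, hg]
    | single k b =>
      rw [jzPsi, Finsupp.linearCombination_single, map_smul, LinearMap.smul_apply, hfkv,
        Finsupp.smul_single, smul_eq_mul, mul_one]
  have hsurj : Function.Surjective φ := fun m => ⟨jzPsi q m, by rw [hφ, heval]⟩
  have hLker : L ≤ LinearMap.ker φ := by
    rw [hL']
    refine Ideal.span_le.mpr ?_
    rintro x (rfl | rfl | rfl)
    all_goals rw [SetLike.mem_coe, LinearMap.mem_ker, hφ]
    · rw [map_sub, map_mul, LinearMap.sub_apply, Module.End.mul_apply, jzRho_e, jzRho_f,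
        AlgHom.commutes, Module.algebraMap_end_apply, hv0, opF_single, opE_single_succ,
        hC1, sub_self]
    · rw [map_sub, LinearMap.sub_apply, jzRho_h, AlgHom.commutes,
        Module.algebraMap_end_apply, hv0, opH_single,
        show jzLam q β 0 = β from rfl, sub_self]
    · rw [jzRho_e, hv0, opE_single_zero]
  have hker : LinearMap.ker φ = L := by
    refine le_antisymm ?_ hLker
    intro u hu
    obtain ⟨l, hl, r, hr, hu'⟩ := Submodule.mem_sup.mp (jz_span q β α u)
    obtain ⟨a, rfl⟩ := hr
    rw [Submodule.restrictScalars_mem] at hl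
    rw [LinearMap.mem_ker, hφ, ← hu', map_add, LinearMap.add_apply, heval] at hu
    have hl0 : jzRho q β l v0 = 0 := by
      have := hLker (hL' ▸ hl)
      rwa [LinearMap.mem_ker, hφ] at this
    rw [hl0, zero_add] at hu
    rw [← hu', hu, map_zero, add_zero]
    exact hL' ▸ hl
  -- simplicity of the Verma module
  haveI hVsimple : IsSimpleModule (JZ q) (ℕ →₀ ℂ) := by
    have hv0ne : v0 ≠ 0 := by
      rw [hv0]
      simp [Finsupp.single_eq_zero]
    haveI : Nontrivial (Submodule (JZ q) (ℕ →₀ ℂ)) :=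
      ⟨⊥, ⊤, fun h => hv0ne ((Submodule.mem_bot _).mp (h ▸ Submodule.mem_top))⟩
    refine { toIsSimpleOrder := ⟨fun N => or_iff_not_imp_left.mpr fun hN => ?_⟩ }
    obtain ⟨m, hmN, hm0⟩ := Submodule.exists_mem_ne_zero_of_ne_bot hN
    have hkey : ∀ n : ℕ, ∀ m : ℕ →₀ ℂ, m ∈ N → m ≠ 0 → m.support.sup id = n →
        v0 ∈ N := by
      intro n
      induction n with
      | zero =>
        intro m hmN hm0 hsup
        have hj0 : m 0 ≠ 0 := by
          obtain ⟨j, hj, hje⟩ := Finset.exists_mem_eq_sup m.support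
            (Finsupp.support_nonempty_iff.mpr hm0) id
          have : j = 0 := by rw [hsup] at hje; exact hje.symm
          subst this
          exact Finsupp.mem_support_iff.mp hj
        have hm : v0 = (algebraMap ℂ (JZ q) (m 0)⁻¹) • m := by
          rw [halg]
          ext j
          cases j with
          | zero =>
            rw [hv0, Finsupp.smul_apply, smul_eq_mul, inv_mul_cancel₀ hj0,
              Finsupp.single_eq_same]
          | succ j =>
            have hjs : m (j+1) = 0 := by
              by_contra hc
              have h1 : j+1 ∈ m.support := Finsupp.mem_support_iff.mpr hc
              have h2 : j+1 ≤ m.support.sup id := Finset.le_sup (f := id) h1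
              omega
            rw [hv0, Finsupp.smul_apply, hjs, smul_zero,
              Finsupp.single_eq_of_ne (by omega : j+1 ≠ (0:ℕ))]
        rw [hm]
        exact N.smul_mem _ hmN
      | succ n ih =>
        intro m hmN hm0 hsup
        set m' : ℕ →₀ ℂ := JZe q • m with hm'
        have hm'app : ∀ j, m' j = jzC q β (j+1) * m (j+1) := by
          intro j
          rw [hm', smul_def, jzRho_e, opE_apply]
        have htop : m (n+1) ≠ 0 := by
          obtain ⟨j, hj, hje⟩ := Finset.exists_mem_eq_sup m.support
            (Finsupp.support_nonempty_iff.mpr hm0) id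
          have : j = n+1 := by rw [hsup] at hje; exact hje.symm
          subst this
          exact Finsupp.mem_support_iff.mp hj
        have hm'n : m' n ≠ 0 := by
          rw [hm'app]
          exact mul_ne_zero (hccne n) htop
        have hm'0 : m' ≠ 0 := fun h => hm'n (by rw [h, Finsupp.zero_apply])
        have hsup' : m'.support.sup id = n := by
          refine le_antisymm (Finset.sup_le fun j hj => ?_) ?_
          · have h1 : m' j ≠ 0 := Finsupp.mem_support_iff.mp hj
            rw [hm'app] at h1
            have h2 : m (j+1) ≠ 0 := fun h => h1 (by rw [h, mul_zero])
            have h3 : j+1 ∈ m.support := Finsupp.mem_support_iff.mpr h2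
            have h4 : j+1 ≤ m.support.sup id := Finset.le_sup (f := id) h3
            simp only [id] at h4 ⊢
            omega
          · have : n ∈ m'.support := Finsupp.mem_support_iff.mpr hm'n
            exact Finset.le_sup (f := id) this
        exact ih m' (N.smul_mem _ hmN) hm'0 hsup'
    have hv0N : v0 ∈ N := hkey _ m hmN hm0 rfl
    have hsingleN : ∀ k : ℕ, Finsupp.single k (1:ℂ) ∈ N := by
      intro k
      induction k with
      | zero => exact hv0N
      | succ k ih =>
        have : Finsupp.single (k+1) (1:ℂ) = JZf q • Finsupp.single k (1:ℂ) := by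
          rw [smul_def, jzRho_f, opF_single]
        rw [this]
        exact N.smul_mem _ ih
    rw [Submodule.eq_top_iff']
    intro x
    induction x using Finsupp.induction with
    | zero => exact N.zero_mem
    | single_add a b f _ _ hf =>
      refine N.add_mem ?_ hf
      have : Finsupp.single a b = (algebraMap ℂ (JZ q) b) • Finsupp.single a (1:ℂ) := by
        rw [halg, Finsupp.smul_single, smul_eq_mul, mul_one]
      rw [this]
      exact N.smul_mem _ (hsingleN a)
  -- assemble
  have equiv := LinearMap.quotKerEquivOfSurjective φ hsurj
  have hsimpleQ : IsSimpleModule (JZ q) (JZ q ⧸ L) := by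
    rw [← hker]
    exact IsSimpleModule.congr equiv
  refine ⟨Ideal.isMaximal_def.mpr (isSimpleModule_iff_isCoatom.mp hsimpleQ), hsimpleQ, ?_⟩
  intro hfin
  have hfin' : Module.Finite ℂ (JZ q ⧸ LinearMap.ker φ) := by rwa [hker]
  have hcs : ∀ (c : ℂ) (x : JZ q ⧸ LinearMap.ker φ), equiv (c • x) = c • equiv x := by
    intro c x
    rw [algebra_compatible_smul (JZ q) c x, map_smul, halg]
  let ϑ : (JZ q ⧸ LinearMap.ker φ) →ₗ[ℂ] (ℕ →₀ ℂ) :=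
    { toFun := equiv, map_add' := map_add equiv, map_smul' := hcs }
  have : Module.Finite ℂ (ℕ →₀ ℂ) :=
    Module.Finite.of_surjective ϑ equiv.surjective
  have hfinN : Finite ℕ := Module.Finite.finite_basis (Finsupp.basisSingleOne (R := ℂ) (ι := ℕ))
  exact not_finite ℕ
end
end

section
/- Let β ∈ ℂ satisfy ((q − 1)·β/2 − 1)² ≠ q^{n} for every nonnegative integer n. Then the left ideal L of U_q(sl_2) generated by e·f, h − β, and f is a maximal left ideal, and the quotient U_q(sl_2)/L is an infinite-dimensional (over ℂ) simple left U_q(sl_2)-module. -/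
noncomputable section

open FreeAlgebra

namespace JZaux

variable (q β : ℂ)

/-! ### Scalar bookkeeping -/

def mu : ℂ := (q - 1) * β / 2 - 1
def lam (k : ℕ) : ℂ := 2 * (1 + mu q β * q⁻¹ ^ k) / (q - 1)
def cc (k : ℕ) : ℂ := (1 - q⁻¹ ^ k) * ((mu q β) ^ 2 * q * q⁻¹ ^ k - 1) / (q - 1) ^ 2

variable {q}

lemma lam_zero (hq1 : q ≠ 1) : lam q β 0 = β := by
  have : q - 1 ≠ 0 := sub_ne_zero.2 hq1
  simp only [lam, mu, pow_zero, mul_one]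
  rw [div_eq_iff this]
  ring

lemma cc_zero : cc q β 0 = 0 := by simp [cc]

lemma lam_rec (hq0 : q ≠ 0) (hq1 : q ≠ 1) (k : ℕ) :
    lam q β k + 2 = q * lam q β (k + 1) := by
  have h1 : q - 1 ≠ 0 := sub_ne_zero.2 hq1
  simp only [lam, pow_succ]
  generalize q⁻¹ ^ k = x
  field_simp
  ring

lemma g_eq (hq1 : q ≠ 1) (k : ℕ) :
    lam q β k + (1 - q) / 4 * (lam q β k) ^ 2
      = (1 - (mu q β) ^ 2 * (q⁻¹ ^ k) ^ 2) / (q - 1) := by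
  have h1 : q - 1 ≠ 0 := sub_ne_zero.2 hq1
  simp only [lam]
  generalize q⁻¹ ^ k = x
  field_simp
  ring

lemma cc_rec (hq0 : q ≠ 0) (hq1 : q ≠ 1) (k : ℕ) :
    cc q β k - (lam q β k + (1 - q) / 4 * (lam q β k) ^ 2) = q * cc q β (k + 1) := by
  have h1 : q - 1 ≠ 0 := sub_ne_zero.2 hq1
  rw [g_eq β hq1]
  simp only [cc, pow_succ]
  generalize q⁻¹ ^ k = x
  field_simp
  ring

lemma cc_ne (hq0 : q ≠ 0) (hq : ∀ m : ℕ, 0 < m → q ^ m ≠ 1)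
    (hβ : ∀ n : ℕ, ((q - 1) * β / 2 - 1) ^ 2 ≠ q ^ n) (k : ℕ) :
    cc q β (k + 1) ≠ 0 := by
  have hq1 : q ≠ 1 := by simpa using hq 1 one_pos
  have h1 : q - 1 ≠ 0 := sub_ne_zero.2 hq1
  have hA : 1 - q⁻¹ ^ (k + 1) ≠ 0 := by
    intro h
    apply hq (k + 1) (Nat.succ_pos k)
    have h2 : q⁻¹ ^ (k + 1) = 1 := by linear_combination -h
    calc q ^ (k+1) = q ^ (k+1) * q⁻¹ ^ (k+1) := by rw [h2, mul_one]
    _ = 1 := by rw [← mul_pow, mul_inv_cancel₀ hq0, one_pow]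
  have hB : (mu q β) ^ 2 * q * q⁻¹ ^ (k + 1) - 1 ≠ 0 := by
    intro h
    apply hβ k
    have h2 : (mu q β) ^ 2 * q * q⁻¹ ^ (k + 1) = 1 := by linear_combination h
    have key : q * q⁻¹ ^ (k + 1) * q ^ k = 1 := by
      rw [pow_succ', ← mul_assoc, mul_inv_cancel₀ hq0, one_mul, ← mul_pow, inv_mul_cancel₀ hq0,
        one_pow]
    show mu q β ^ 2 = q ^ k
    linear_combination (q : ℂ) ^ k * h2 - (mu q β) ^ 2 * key
  simp only [cc, div_ne_zero_iff]
  exact ⟨mul_ne_zero hA hB, pow_ne_zero _ h1⟩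

/-! ### The lowest weight representation on `ℕ →₀ ℂ` -/

abbrev MM : Type := ℕ →₀ ℂ

def Eop : MM →ₗ[ℂ] MM := Finsupp.lmapDomain ℂ ℂ (· + 1)
variable (q) in
def Hop : MM →ₗ[ℂ] MM := Finsupp.lsum ℂ fun k => lam q β k • Finsupp.lsingle k
variable (q) in
def Fop : MM →ₗ[ℂ] MM := Finsupp.lsum ℂ fun k => cc q β k • Finsupp.lsingle (k - 1)

@[simp] lemma Eop_single (k : ℕ) (a : ℂ) :
    Eop (Finsupp.single k a) = Finsupp.single (k + 1) a := by
  simp [Eop, Finsupp.lmapDomain_apply, Finsupp.mapDomain_single]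

@[simp] lemma Hop_single (k : ℕ) (a : ℂ) :
    Hop q β (Finsupp.single k a) = Finsupp.single k (lam q β k * a) := by
  simp [Hop, Finsupp.smul_single]

@[simp] lemma Fop_single (k : ℕ) (a : ℂ) :
    Fop q β (Finsupp.single k a) = Finsupp.single (k - 1) (cc q β k * a) := by
  simp [Fop, Finsupp.smul_single]

def phi (hq0 : q ≠ 0) (hq1 : q ≠ 1) : JZ q →ₐ[ℂ] Module.End ℂ MM :=
  RingQuot.liftAlgHom ℂ (s := JZRel q)
    ⟨FreeAlgebra.lift ℂ ![Eop, Fop q β, Hop q β], by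
      rintro x y (h | h | h)
      · rw [two_mul]
        apply Finsupp.lhom_ext
        intro k a
        simp only [map_sub, map_mul, map_add, map_neg, FreeAlgebra.lift_ι_apply,
          Matrix.cons_val_zero, Matrix.cons_val_one, Matrix.head_cons, Matrix.cons_val_two,
          Matrix.tail_cons, AlgHom.commutes,
          LinearMap.sub_apply, LinearMap.add_apply, LinearMap.neg_apply, Module.End.mul_apply,
          Module.algebraMap_end_apply, Eop_single, Hop_single, Fop_single,
          Finsupp.smul_single, Nat.add_sub_cancel, smul_eq_mul]
        rw [← Finsupp.single_sub, ← Finsupp.single_add]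
        congr 1
        linear_combination -a * lam_rec β hq0 hq1 k
      · rw [two_mul]
        apply Finsupp.lhom_ext
        intro k a
        simp only [map_sub, map_mul, map_add, map_neg, FreeAlgebra.lift_ι_apply,
          Matrix.cons_val_zero, Matrix.cons_val_one, Matrix.head_cons, Matrix.cons_val_two,
          Matrix.tail_cons, AlgHom.commutes,
          LinearMap.sub_apply, LinearMap.add_apply, LinearMap.neg_apply, Module.End.mul_apply,
          Module.algebraMap_end_apply, Eop_single, Hop_single, Fop_single,
          Finsupp.smul_single, Nat.add_sub_cancel, smul_eq_mul]
        cases k with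
        | zero => simp [cc_zero]
        | succ k =>
          simp only [Nat.succ_sub_one]
          rw [← Finsupp.single_sub, ← Finsupp.single_add, ← Finsupp.single_neg]
          congr 1
          linear_combination (cc q β (k + 1) * a) * lam_rec β hq0 hq1 k
      · apply Finsupp.lhom_ext
        intro k a
        simp only [map_sub, map_mul, map_add, map_neg, FreeAlgebra.lift_ι_apply,
          Matrix.cons_val_zero, Matrix.cons_val_one, Matrix.head_cons, Matrix.cons_val_two,
          Matrix.tail_cons, AlgHom.commutes,
          LinearMap.sub_apply, LinearMap.add_apply, LinearMap.neg_apply, Module.End.mul_apply,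
          Module.algebraMap_end_apply, Eop_single, Hop_single, Fop_single,
          Finsupp.smul_single, Nat.add_sub_cancel, smul_eq_mul]
        cases k with
        | zero =>
          simp only [Nat.zero_sub, Nat.zero_add, cc_zero, zero_mul, Finsupp.single_zero,
            zero_sub]
          rw [← Finsupp.single_add, ← Finsupp.single_neg]
          congr 1
          linear_combination a * cc_rec β hq0 hq1 0 - a * cc_zero β
        | succ k =>
          simp only [Nat.succ_sub_one]
          rw [← Finsupp.single_sub, ← Finsupp.single_add]
          congr 1
          linear_combination a * cc_rec β hq0 hq1 (k + 1)⟩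

variable {β}

lemma phi_e (hq0 : q ≠ 0) (hq1 : q ≠ 1) : phi β hq0 hq1 (JZe q) = Eop := by
  rw [JZe, phi, RingQuot.liftAlgHom_mkAlgHom_apply, FreeAlgebra.lift_ι_apply]
  rfl

lemma phi_f (hq0 : q ≠ 0) (hq1 : q ≠ 1) : phi β hq0 hq1 (JZf q) = Fop q β := by
  rw [JZf, phi, RingQuot.liftAlgHom_mkAlgHom_apply, FreeAlgebra.lift_ι_apply]
  rfl

lemma phi_h (hq0 : q ≠ 0) (hq1 : q ≠ 1) : phi β hq0 hq1 (JZh q) = Hop q β := by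
  rw [JZh, phi, RingQuot.liftAlgHom_mkAlgHom_apply, FreeAlgebra.lift_ι_apply]
  rfl

/-! ### Relations inside `JZ q` -/

variable (q) in
lemma rel1' : algebraMap ℂ (JZ q) q * (JZh q * JZe q) - JZe q * JZh q = 2 * JZe q := by
  have h := RingQuot.mkAlgHom_rel ℂ (JZRel.rel1 (q := q))
  simpa only [map_sub, map_mul, map_add, AlgHom.commutes, map_ofNat, JZe, JZh] using h

variable (q) in
lemma rel3' : JZe q * JZf q - algebraMap ℂ (JZ q) q * (JZf q * JZe q)
    = JZh q + algebraMap ℂ (JZ q) ((1 - q) / 4) * (JZh q * JZh q) := by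
  have h := RingQuot.mkAlgHom_rel ℂ (JZRel.rel3 (q := q))
  simpa only [map_sub, map_mul, map_add, AlgHom.commutes, JZe, JZf, JZh] using h

lemma he (hq0 : q ≠ 0) :
    JZh q * JZe q = q⁻¹ • (2 * JZe q + JZe q * JZh q) := by
  have h1 : algebraMap ℂ (JZ q) q * (JZh q * JZe q) = 2 * JZe q + JZe q * JZh q :=
    sub_eq_iff_eq_add.mp (rel1' q)
  calc JZh q * JZe q = (q⁻¹ * q) • (JZh q * JZe q) := by
        rw [inv_mul_cancel₀ hq0, one_smul]
    _ = q⁻¹ • (algebraMap ℂ (JZ q) q * (JZh q * JZe q)) := by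
        rw [← smul_smul, Algebra.smul_def q]
    _ = q⁻¹ • (2 * JZe q + JZe q * JZh q) := by rw [h1]

lemma fe (hq0 : q ≠ 0) :
    JZf q * JZe q = q⁻¹ • (JZe q * JZf q - JZh q
      - algebraMap ℂ (JZ q) ((1 - q) / 4) * (JZh q * JZh q)) := by
  have h1 : algebraMap ℂ (JZ q) q * (JZf q * JZe q)
      = JZe q * JZf q - JZh q - algebraMap ℂ (JZ q) ((1 - q) / 4) * (JZh q * JZh q) := by
    have h := rel3' q
    have h2 := sub_eq_iff_eq_add.mp h
    -- h2 : e*f = (h + γ h²) + algq * (f*e)  ... rearrange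
    rw [sub_eq_iff_eq_add] at h
    linear_combination (norm := abel) -h
  calc JZf q * JZe q = (q⁻¹ * q) • (JZf q * JZe q) := by
        rw [inv_mul_cancel₀ hq0, one_smul]
    _ = q⁻¹ • (algebraMap ℂ (JZ q) q * (JZf q * JZe q)) := by
        rw [← smul_smul, Algebra.smul_def q]
    _ = _ := by rw [h1]

end JZaux

namespace Part3

open JZaux Finsupp

variable (q β : ℂ)

def Lsp : Ideal (JZ q) :=
  Ideal.span {JZe q * JZf q, JZh q - algebraMap ℂ (JZ q) β, JZf q}

variable {q β}

lemma mem2 : JZh q - algebraMap ℂ (JZ q) β ∈ Lsp q β :=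
  Ideal.subset_span (by simp)

lemma mem3 : JZf q ∈ Lsp q β :=
  Ideal.subset_span (by simp)

lemma L_mul_mem (u : JZ q) {x : JZ q} (hx : x ∈ Lsp q β) : u * x ∈ Lsp q β := by
  simpa [smul_eq_mul] using (Lsp q β).smul_mem u hx

lemma h_pow (hq0 : q ≠ 0) (hq1 : q ≠ 1) :
    ∀ k, ∃ l ∈ Lsp q β, JZh q * JZe q ^ k = lam q β k • JZe q ^ k + l
  | 0 => ⟨JZh q - algebraMap ℂ (JZ q) β, mem2, by
      rw [pow_zero, mul_one, lam_zero β hq1, Algebra.smul_def, mul_one]; abel⟩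
  | (k+1) => by
      obtain ⟨l, hl, hlk⟩ := h_pow hq0 hq1 k
      refine ⟨q⁻¹ • (JZe q * l),
        Submodule.smul_of_tower_mem _ _ (L_mul_mem _ hl), ?_⟩
      have hlam : q⁻¹ * (lam q β k + 2) = lam q β (k+1) := by
        rw [lam_rec β hq0 hq1 k]; field_simp
      have h2 : (2 : JZ q) * JZe q ^ (k+1) = (2:ℂ) • JZe q ^ (k+1) := by
        rw [Algebra.smul_def, map_ofNat]
      calc JZh q * JZe q ^ (k+1) = (JZh q * JZe q) * JZe q ^ k := by
            rw [pow_succ', mul_assoc]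
        _ = (q⁻¹ • (2 * JZe q + JZe q * JZh q)) * JZe q ^ k := by rw [he hq0]
        _ = q⁻¹ • (2 * JZe q ^ (k+1) + JZe q * (JZh q * JZe q ^ k)) := by
            rw [smul_mul_assoc, add_mul, mul_assoc, mul_assoc, ← pow_succ']
        _ = q⁻¹ • (2 * JZe q ^ (k+1) + JZe q * (lam q β k • JZe q ^ k + l)) := by rw [hlk]
        _ = (q⁻¹ * (lam q β k + 2)) • JZe q ^ (k+1) + q⁻¹ • (JZe q * l) := by
            rw [mul_add, mul_smul_comm, ← pow_succ', h2]
            module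
        _ = lam q β (k+1) • JZe q ^ (k+1) + q⁻¹ • (JZe q * l) := by rw [hlam]

lemma cc_smul_pow (k : ℕ) :
    cc q β k • (JZe q * JZe q ^ (k-1)) = cc q β k • JZe q ^ k := by
  cases k with
  | zero => rw [cc_zero]; simp
  | succ k => rw [Nat.succ_sub_one, ← pow_succ']

lemma f_pow (hq0 : q ≠ 0) (hq1 : q ≠ 1) :
    ∀ k, ∃ l ∈ Lsp q β, JZf q * JZe q ^ k = cc q β k • JZe q ^ (k-1) + l
  | 0 => ⟨JZf q, mem3, by rw [pow_zero, mul_one, cc_zero, zero_smul, zero_add]⟩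
  | (k+1) => by
      obtain ⟨l₁, hl₁, hfk⟩ := f_pow hq0 hq1 k
      obtain ⟨l₂, hl₂, hhk⟩ := h_pow hq0 hq1 k
      have hγ : ∀ y : JZ q, algebraMap ℂ (JZ q) ((1-q)/4) * y = ((1-q)/4) • y :=
        fun y => (Algebra.smul_def _ y).symm
      have hcc : q⁻¹ * (cc q β k - (lam q β k + (1-q)/4 * lam q β k ^ 2)) = cc q β (k+1) := by
        rw [cc_rec β hq0 hq1 k]; field_simp
      refine ⟨q⁻¹ • (JZe q * l₁ - l₂ - ((1-q)/4 * lam q β k) • l₂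
          - ((1-q)/4) • (JZh q * l₂)), ?_, ?_⟩
      · exact Submodule.smul_of_tower_mem _ _ (sub_mem (sub_mem (sub_mem
          (L_mul_mem _ hl₁) hl₂) (Submodule.smul_of_tower_mem _ _ hl₂))
          (Submodule.smul_of_tower_mem _ _ (L_mul_mem _ hl₂)))
      · calc JZf q * JZe q ^ (k+1) = (JZf q * JZe q) * JZe q ^ k := by
              rw [pow_succ', mul_assoc]
          _ = (q⁻¹ • (JZe q * JZf q - JZh q
                - algebraMap ℂ (JZ q) ((1-q)/4) * (JZh q * JZh q))) * JZe q ^ k := by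
              rw [fe hq0]
          _ = q⁻¹ • (JZe q * (JZf q * JZe q ^ k) - JZh q * JZe q ^ k
                - ((1-q)/4) • (JZh q * (JZh q * JZe q ^ k))) := by
              rw [smul_mul_assoc, sub_mul, sub_mul, mul_assoc, hγ, smul_mul_assoc,
                mul_assoc]
          _ = q⁻¹ • (cc q β k • (JZe q * JZe q ^ (k-1)) + JZe q * l₁
                - (lam q β k • JZe q ^ k + l₂)
                - ((1-q)/4) • (lam q β k • (lam q β k • JZe q ^ k + l₂) + JZh q * l₂)) := by
              rw [hfk, hhk, mul_add, mul_smul_comm, mul_add, mul_smul_comm, hhk]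
          _ = q⁻¹ • (cc q β k • JZe q ^ k + JZe q * l₁
                - (lam q β k • JZe q ^ k + l₂)
                - ((1-q)/4) • (lam q β k • (lam q β k • JZe q ^ k + l₂) + JZh q * l₂)) := by
              rw [cc_smul_pow]
          _ = (q⁻¹ * (cc q β k - (lam q β k + (1-q)/4 * lam q β k ^ 2))) • JZe q ^ (k+1-1)
                + q⁻¹ • (JZe q * l₁ - l₂ - ((1-q)/4 * lam q β k) • l₂
                  - ((1-q)/4) • (JZh q * l₂)) := by
              rw [Nat.add_sub_cancel]
              module
          _ = cc q β (k+1) • JZe q ^ (k+1-1) + q⁻¹ • (JZe q * l₁ - l₂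
                - ((1-q)/4 * lam q β k) • l₂ - ((1-q)/4) • (JZh q * l₂)) := by rw [hcc]

variable (q) in
def Th : MM →ₗ[ℂ] JZ q :=
  Finsupp.lsum ℂ fun k => LinearMap.toSpanSingleton ℂ (JZ q) (JZe q ^ k)

@[simp] lemma Th_single (k : ℕ) (a : ℂ) :
    Th q (Finsupp.single k a) = a • JZe q ^ k := by
  simp [Th, LinearMap.toSpanSingleton_apply]

lemma eTh (p : MM) : JZe q * Th q p = Th q (Eop p) := by
  have h : LinearMap.mulLeft ℂ (JZe q) ∘ₗ Th q = Th q ∘ₗ Eop :=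
    Finsupp.lhom_ext fun k a => by
      simp [LinearMap.mulLeft_apply, mul_smul_comm, pow_succ']
  exact LinearMap.congr_fun h p

lemma hTh (hq0 : q ≠ 0) (hq1 : q ≠ 1) (p : MM) :
    ∃ l ∈ Lsp q β, JZh q * Th q p = Th q (Hop q β p) + l := by
  induction p using Finsupp.induction_linear with
  | zero => exact ⟨0, zero_mem _, by simp⟩
  | add f g hf hg =>
      obtain ⟨l₁, hl₁, e₁⟩ := hf
      obtain ⟨l₂, hl₂, e₂⟩ := hg
      exact ⟨l₁ + l₂, add_mem hl₁ hl₂, by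
        rw [map_add, mul_add, e₁, e₂, map_add, map_add]; abel⟩
  | single k a =>
      obtain ⟨l, hl, hk⟩ := h_pow hq0 hq1 k
      refine ⟨a • l, Submodule.smul_of_tower_mem _ _ hl, ?_⟩
      rw [Th_single, mul_smul_comm, hk, Hop_single, Th_single, smul_add, smul_smul,
        mul_comm a]

lemma fTh (hq0 : q ≠ 0) (hq1 : q ≠ 1) (p : MM) :
    ∃ l ∈ Lsp q β, JZf q * Th q p = Th q (Fop q β p) + l := by
  induction p using Finsupp.induction_linear with
  | zero => exact ⟨0, zero_mem _, by simp⟩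
  | add f g hf hg =>
      obtain ⟨l₁, hl₁, e₁⟩ := hf
      obtain ⟨l₂, hl₂, e₂⟩ := hg
      exact ⟨l₁ + l₂, add_mem hl₁ hl₂, by
        rw [map_add, mul_add, e₁, e₂, map_add, map_add]; abel⟩
  | single k a =>
      obtain ⟨l, hl, hk⟩ := f_pow hq0 hq1 k
      refine ⟨a • l, Submodule.smul_of_tower_mem _ _ hl, ?_⟩
      rw [Th_single, mul_smul_comm, hk, Fop_single, Th_single, smul_add, smul_smul,
        mul_comm a]

variable (q β) in
def TT : Submodule ℂ (JZ q) := (Lsp q β).restrictScalars ℂ ⊔ LinearMap.range (Th q)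

lemma L_le_TT {x : JZ q} (hx : x ∈ Lsp q β) : x ∈ TT q β :=
  Submodule.mem_sup_left hx

lemma Th_mem_TT (p : MM) : Th q p ∈ TT q β :=
  Submodule.mem_sup_right (LinearMap.mem_range_self _ p)

lemma mul_mem_TT (hq0 : q ≠ 0) (hq1 : q ≠ 1) (u t : JZ q) (ht : t ∈ TT q β) :
    u * t ∈ TT q β := by
  obtain ⟨x, rfl⟩ := RingQuot.mkAlgHom_surjective ℂ (JZRel q) u
  induction x using FreeAlgebra.induction generalizing t with
  | grade0 r =>
      rw [AlgHom.commutes, ← Algebra.smul_def]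
      exact Submodule.smul_mem _ r ht
  | grade1 i =>
      obtain ⟨a, ha, b, hb, rfl⟩ := Submodule.mem_sup.mp ht
      obtain ⟨p, rfl⟩ := hb
      rw [mul_add]
      refine add_mem (L_le_TT (L_mul_mem _ ha)) ?_
      fin_cases i
      · show JZe q * Th q p ∈ TT q β
        rw [eTh]
        exact Th_mem_TT _
      · show JZf q * Th q p ∈ TT q β
        obtain ⟨l, hl, hEq⟩ := fTh hq0 hq1 p
        rw [hEq]
        exact add_mem (Th_mem_TT _) (L_le_TT hl)
      · show JZh q * Th q p ∈ TT q β
        obtain ⟨l, hl, hEq⟩ := hTh hq0 hq1 p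
        rw [hEq]
        exact add_mem (Th_mem_TT _) (L_le_TT hl)
  | mul x y ihx ihy =>
      rw [map_mul, mul_assoc]
      exact ihx _ (ihy t ht)
  | add x y ihx ihy =>
      rw [map_add, add_mul]
      exact add_mem (ihx t ht) (ihy t ht)

lemma decompose (hq0 : q ≠ 0) (hq1 : q ≠ 1) (u : JZ q) :
    ∃ p : MM, ∃ l ∈ Lsp q β, u = Th q p + l := by
  have h1 : (1 : JZ q) ∈ TT q β := by
    have : Th q (Finsupp.single 0 1) = 1 := by simp
    exact this ▸ Th_mem_TT _
  have hu : u ∈ TT q β := by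
    simpa using mul_mem_TT (β := β) hq0 hq1 u 1 h1
  obtain ⟨a, ha, b, hb, hab⟩ := Submodule.mem_sup.mp hu
  obtain ⟨p, rfl⟩ := hb
  exact ⟨p, a, ha, by rw [← hab]; abel⟩

lemma fpow_Th (hq0 : q ≠ 0) (hq1 : q ≠ 1) (n : ℕ) (p : MM) :
    ∃ l ∈ Lsp q β, JZf q ^ n * Th q p = Th q ((Fop q β ^ n) p) + l := by
  induction n generalizing p with
  | zero => exact ⟨0, zero_mem _, by simp⟩
  | succ n ih =>
      obtain ⟨l₁, hl₁, e₁⟩ := ih p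
      obtain ⟨l₂, hl₂, e₂⟩ := fTh hq0 hq1 ((Fop q β ^ n) p)
      refine ⟨JZf q * l₁ + l₂, add_mem (L_mul_mem _ hl₁) hl₂, ?_⟩
      have hF : (Fop q β ^ (n+1)) p = Fop q β ((Fop q β ^ n) p) := by
        rw [pow_succ']; rfl
      rw [pow_succ', mul_assoc, e₁, mul_add, e₂, hF]
      abel

variable (q β) in
def Pd (d : ℕ) : ℂ := ∏ i ∈ Finset.range d, cc q β (i+1)

lemma Fop_pow_self (d : ℕ) (a : ℂ) :
    (Fop q β ^ d) (Finsupp.single d a) = Finsupp.single 0 (Pd q β d * a) := by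
  induction d generalizing a with
  | zero => simp [Pd]
  | succ d ih =>
      rw [pow_succ, Module.End.mul_apply, Fop_single, Nat.succ_sub_one, ih]
      congr 1
      rw [Pd, Pd, Finset.prod_range_succ]
      ring

lemma Fop_pow_kill (j : ℕ) (a : ℂ) : (Fop q β ^ (j+1)) (Finsupp.single j a) = 0 := by
  induction j generalizing a with
  | zero => rw [pow_one, Fop_single, cc_zero, zero_mul, Finsupp.single_zero]
  | succ j ih => rw [pow_succ, Module.End.mul_apply, Fop_single, Nat.succ_sub_one, ih]

lemma Fop_pow_lt {j d : ℕ} (h : j < d) (a : ℂ) :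
    (Fop q β ^ d) (Finsupp.single j a) = 0 := by
  obtain ⟨m, rfl⟩ : ∃ m, d = m + (j+1) := ⟨d - (j+1), by omega⟩
  rw [pow_add, Module.End.mul_apply, Fop_pow_kill, map_zero]

lemma Fop_pow_max (p : MM) (hp : p.support.Nonempty) :
    (Fop q β ^ (p.support.max' hp)) p
      = Finsupp.single 0 (Pd q β (p.support.max' hp) * p (p.support.max' hp)) := by
  set d := p.support.max' hp with hd
  have h1 : (Fop q β ^ d) p = ∑ j ∈ p.support, (Fop q β ^ d) (Finsupp.single j (p j)) := by
    conv_lhs => rw [← Finsupp.sum_single p]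
    rw [map_finsuppSum]
    rfl
  rw [h1, Finset.sum_eq_single_of_mem d (p.support.max'_mem hp)]
  · exact Fop_pow_self d (p d)
  · intro j hj hjd
    exact Fop_pow_lt (lt_of_le_of_ne (p.support.le_max' j hj) hjd) _

/-! ### The evaluation map -/

variable (β) in
def psi (hq0 : q ≠ 0) (hq1 : q ≠ 1) : JZ q →ₗ[ℂ] MM where
  toFun u := phi β hq0 hq1 u (Finsupp.single 0 1)
  map_add' u v := by
    show phi β hq0 hq1 (u + v) (Finsupp.single 0 1)
      = phi β hq0 hq1 u (Finsupp.single 0 1) + phi β hq0 hq1 v (Finsupp.single 0 1)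
    rw [map_add, LinearMap.add_apply]
  map_smul' c u := by
    show phi β hq0 hq1 (c • u) (Finsupp.single 0 1)
      = (RingHom.id ℂ) c • phi β hq0 hq1 u (Finsupp.single 0 1)
    rw [map_smul, LinearMap.smul_apply, RingHom.id_apply]

lemma psi_L_zero (hq0 : q ≠ 0) (hq1 : q ≠ 1) {l : JZ q} (hl : l ∈ Lsp q β) :
    psi β hq0 hq1 l = 0 := by
  induction hl using Submodule.span_induction with
  | mem x hx =>
      rcases hx with hx | hx | hx
      · rw [hx]
        show phi β hq0 hq1 (JZe q * JZf q) _ = 0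
        rw [map_mul, Module.End.mul_apply, phi_f, phi_e, Fop_single, cc_zero, zero_mul,
          Finsupp.single_zero, map_zero]
      · rw [hx]
        show phi β hq0 hq1 (JZh q - algebraMap ℂ (JZ q) β) _ = 0
        rw [map_sub, LinearMap.sub_apply, phi_h, Hop_single, AlgHom.commutes,
          Module.algebraMap_end_apply, lam_zero β hq1, Finsupp.smul_single, smul_eq_mul,
          sub_self]
      · rw [Set.mem_singleton_iff.mp hx]
        show phi β hq0 hq1 (JZf q) _ = 0
        rw [phi_f, Fop_single, cc_zero, zero_mul, Finsupp.single_zero]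
  | zero => exact map_zero _
  | add x y _ _ ihx ihy => rw [map_add, ihx, ihy, add_zero]
  | smul r x _ ih =>
      show phi β hq0 hq1 (r • x) _ = 0
      rw [smul_eq_mul, map_mul, Module.End.mul_apply]
      have : phi β hq0 hq1 x (Finsupp.single 0 1) = 0 := ih
      rw [this, map_zero]

lemma Epow_single (k : ℕ) : (Eop ^ k) (Finsupp.single 0 1) = Finsupp.single k 1 := by
  induction k with
  | zero => rfl
  | succ k ih => rw [pow_succ', Module.End.mul_apply, ih, Eop_single]

lemma psi_Th (hq0 : q ≠ 0) (hq1 : q ≠ 1) (p : MM) : psi β hq0 hq1 (Th q p) = p := by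
  have h : (psi β hq0 hq1) ∘ₗ Th q = LinearMap.id :=
    Finsupp.lhom_ext fun k a => by
      show psi β hq0 hq1 (Th q (Finsupp.single k a)) = Finsupp.single k a
      rw [Th_single]
      show phi β hq0 hq1 (a • JZe q ^ k) (Finsupp.single 0 1) = _
      rw [map_smul, map_pow, phi_e, LinearMap.smul_apply, Epow_single,
        Finsupp.smul_single, smul_eq_mul, mul_one]
  exact LinearMap.congr_fun h p

end Part3


open JZaux Part3

/-- for `q` not a root of unity, if `β` satisfies
`((q − 1)·β/2 − 1)² ≠ qⁿ` for every `n ∈ ℕ`, then the left ideal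
`L = (e·f, h − β, f)` of `U_q(sl₂)` is a maximal left ideal and `U_q(sl₂)/L`
is an infinite-dimensional simple left module. -/
theorem jz_infinite_dimensional_lowest_weight_simple (q : ℂ) (hq0 : q ≠ 0)
    (hq : ∀ m : ℕ, 0 < m → q ^ m ≠ 1)
    (β : ℂ) (hβ : ∀ n : ℕ, ((q - 1) * β / 2 - 1) ^ 2 ≠ q ^ n)
    (L : Ideal (JZ q))
    (hL : L = Ideal.span {JZe q * JZf q,
        JZh q - algebraMap ℂ (JZ q) β, JZf q}) :
    L.IsMaximal ∧ IsSimpleModule (JZ q) (JZ q ⧸ L) ∧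
      ¬ Module.Finite ℂ (JZ q ⧸ L) := by
  have hq1 : q ≠ 1 := by simpa using hq 1 one_pos
  have hLL : L = Lsp q β := hL
  subst hLL
  have hne : Lsp q β ≠ ⊤ := by
    intro htop
    have h1 : (1 : JZ q) ∈ Lsp q β := htop ▸ Submodule.mem_top
    have hz := psi_L_zero (β := β) hq0 hq1 h1
    have h2 : psi β hq0 hq1 1 = Finsupp.single 0 1 := by
      show phi β hq0 hq1 1 (Finsupp.single 0 1) = _
      rw [map_one, Module.End.one_apply]
    rw [h2] at hz
    exact one_ne_zero (Finsupp.single_eq_zero.mp hz)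
  have hmax : ∀ J : Ideal (JZ q), Lsp q β < J → J = ⊤ := by
    intro J hJ
    obtain ⟨u, huJ, huL⟩ := SetLike.exists_of_lt hJ
    obtain ⟨p, l, hl, rfl⟩ := decompose (β := β) hq0 hq1 u
    have hp : p ≠ 0 := by
      rintro rfl
      exact huL (by simpa using hl)
    have hTp : Th q p ∈ J := by
      have hlJ : l ∈ J := hJ.le hl
      simpa using J.sub_mem huJ hlJ
    have hps : p.support.Nonempty := Finsupp.support_nonempty_iff.mpr hp
    set d := p.support.max' hps with hd
    obtain ⟨l₂, hl₂, e₂⟩ := fpow_Th (β := β) hq0 hq1 d p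
    have hfd : JZf q ^ d * Th q p ∈ J := by
      simpa [smul_eq_mul] using J.smul_mem (JZf q ^ d) hTp
    have h3 : Th q ((Fop q β ^ d) p) = JZf q ^ d * Th q p - l₂ := by
      rw [e₂]; abel
    have hmem : Th q ((Fop q β ^ d) p) ∈ J := by
      rw [h3]; exact J.sub_mem hfd (hJ.le hl₂)
    rw [Fop_pow_max p hps, Th_single, pow_zero] at hmem
    have hc : Pd q β d * p d ≠ 0 := by
      apply mul_ne_zero
      · exact Finset.prod_ne_zero_iff.mpr fun i _ => cc_ne β hq0 hq hβ i
      · exact Finsupp.mem_support_iff.mp (p.support.max'_mem hps)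
    have h1 : (1 : JZ q) ∈ J := by
      have hsm := J.smul_of_tower_mem ((Pd q β d * p d)⁻¹) hmem
      rwa [smul_smul, inv_mul_cancel₀ hc, one_smul] at hsm
    exact (Ideal.eq_top_iff_one J).mpr h1
  have hco : IsCoatom (Lsp q β) := ⟨hne, hmax⟩
  refine ⟨Ideal.isMaximal_def.mpr hco, isSimpleModule_iff_isCoatom.mpr hco, ?_⟩
  intro hfin
  haveI := hfin
  have hker : (Lsp q β).restrictScalars ℂ ≤ LinearMap.ker (psi β hq0 hq1) :=
    fun x hx => LinearMap.mem_ker.mpr (psi_L_zero hq0 hq1 hx)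
  let g : (JZ q ⧸ (Lsp q β).restrictScalars ℂ) →ₗ[ℂ] MM :=
    ((Lsp q β).restrictScalars ℂ).liftQ (psi β hq0 hq1) hker
  let eqv := Submodule.Quotient.restrictScalarsEquiv ℂ (Lsp q β)
  have hsur : Function.Surjective (g ∘ₗ eqv.symm.toLinearMap) := by
    intro m
    refine ⟨Submodule.Quotient.mk (Th q m), ?_⟩
    show g (eqv.symm (Submodule.Quotient.mk (Th q m))) = m
    rw [show eqv.symm (Submodule.Quotient.mk (Th q m))
        = Submodule.Quotient.mk (Th q m) from
      Submodule.Quotient.restrictScalarsEquiv_symm_mk ℂ _ _]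
    show psi β hq0 hq1 (Th q m) = m
    exact psi_Th hq0 hq1 m
  have hMfin : Module.Finite ℂ MM := Module.Finite.of_surjective _ hsur
  haveI := hMfin
  haveI : Fintype ℕ :=
    FiniteDimensional.fintypeBasisIndex (Finsupp.basisSingleOne : Module.Basis ℕ ℂ MM)
  exact not_finite ℕ
end
end
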